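/- arXiv:2105.13724 — 6 statements merged into one kernel-verified Lean document; each statement's English description precedes it below -/
import Mathlib

section
/- For all positive real constants a, b, σ and all β ∈ (1/2, 1), the mean of the stationary density of the CKLS model equals a/b: that is, ∫₀^∞ x · p_∞(x) dx = a/b, where p_∞(x) = G·x^{−2β}·E(x) and G = (∫₀^∞ y^{−2β} E(y) dy)^{−1}. Equivalently, b·∫₀^∞ x^{1−2β} E(x) dx = a·∫₀^∞ x^{−2β} E(x) dx. -/
open MeasureTheory Set Filter Topology

noncomputable def cklsE (a b σ β : ℝ) (x : ℝ) : ℝ :=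
  Real.exp ((2/σ^2) * (a * x ^ (1 - 2*β) / (1 - 2*β) - b * x ^ (2 - 2*β) / (2 - 2*β)))

/-- elementary bound: `exp (-(k x^q)) ≤ (n/k)^n x^(-(q n))` for `x > 0`, `k > 0`. -/
lemma ckls_exp_neg_le (k q : ℝ) (hk : 0 < k) (n : ℕ) {x : ℝ} (hx : 0 < x) :
    Real.exp (-(k * x ^ q)) ≤ ((n : ℝ) / k) ^ n * x ^ (-(q * n)) := by
  have hxq : 0 < x ^ q := Real.rpow_pos_of_pos hx q
  have hu : 0 < k * x ^ q := mul_pos hk hxq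
  have hrw : x ^ (-(q * (n : ℝ))) = ((x ^ q) ^ n)⁻¹ := by
    rw [show -(q * (n : ℝ)) = q * (-(n : ℝ)) by ring, Real.rpow_mul hx.le,
      Real.rpow_neg hxq.le, Real.rpow_natCast]
  rcases Nat.eq_zero_or_pos n with rfl | hn
  · simp [Real.exp_le_one_iff, hu.le, neg_nonpos]
  · have h1 : ((k * x ^ q) / n) ^ n ≤ Real.exp (k * x ^ q) := by
      calc ((k * x ^ q) / n) ^ n ≤ (Real.exp ((k * x ^ q) / n)) ^ n := by
            apply pow_le_pow_left₀ (by positivity)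
            nlinarith [Real.add_one_le_exp ((k * x ^ q) / n)]
        _ = Real.exp ((n : ℝ) * ((k * x ^ q) / n)) := by
            rw [← Real.exp_nat_mul]
        _ = Real.exp (k * x ^ q) := by
            congr 1
            field_simp
    have hpos : 0 < ((k * x ^ q) / n) ^ n := by positivity
    have h2 : Real.exp (-(k * x ^ q)) ≤ (((k * x ^ q) / n) ^ n)⁻¹ := by
      rw [Real.exp_neg]
      exact inv_anti₀ hpos h1
    refine h2.trans (le_of_eq ?_)
    rw [hrw, ← inv_pow, ← inv_pow, ← mul_pow]
    congr 1
    field_simp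

lemma ckls_continuousOn (a b σ β s : ℝ) :
    ContinuousOn (fun x : ℝ => x ^ s * cklsE a b σ β x) (Set.Ioi 0) := by
  have hrp : ∀ (p : ℝ), ContinuousOn (fun x : ℝ => x ^ p) (Set.Ioi 0) := fun p x hx =>
    (Real.continuousAt_rpow_const x p (Or.inl (ne_of_gt hx))).continuousWithinAt
  refine (hrp s).mul ?_
  unfold cklsE
  exact Real.continuous_exp.comp_continuousOn
    (continuousOn_const.mul (((continuousOn_const.mul (hrp (1 - 2*β))).div_const _).sub
      ((continuousOn_const.mul (hrp (2 - 2*β))).div_const _)))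

lemma ckls_integrable (a b σ β : ℝ) (ha : 0 < a) (hb : 0 < b) (hσ : 0 < σ)
    (hβ : β ∈ Set.Ioo (1/2 : ℝ) 1) (s : ℝ) :
    IntegrableOn (fun x : ℝ => x ^ s * cklsE a b σ β x) (Set.Ioi 0) := by
  obtain ⟨hβ1, hβ2⟩ := hβ
  have hc : 0 < 2/σ^2 := by positivity
  have h1 : 1 - 2*β < 0 := by linarith
  have h2 : 0 < 2 - 2*β := by linarith
  have hq : 0 < 2*β - 1 := by linarith
  have hk : 0 < (2/σ^2) * a / (2*β - 1) := by positivity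
  have hd : 0 < (2/σ^2) * b / (2 - 2*β) := by positivity
  set k := (2/σ^2) * a / (2*β - 1) with hkdef
  set d := (2/σ^2) * b / (2 - 2*β) with hddef
  rw [← Set.Ioc_union_Ioi_eq_Ioi (zero_le_one : (0:ℝ) ≤ 1), integrableOn_union]
  constructor
  · -- on Ioc 0 1
    obtain ⟨n, hn⟩ := exists_nat_gt ((-1 - s) / (2*β - 1))
    have he : -1 < s + (2*β - 1) * n := by
      have := (div_lt_iff₀ hq).mp hn
      nlinarith
    have hint : IntegrableOn
        (fun x : ℝ => ((n:ℝ) / k) ^ n * x ^ (s + (2*β-1)*n)) (Set.Ioc 0 1) := by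
      have hbase : IntegrableOn (fun x : ℝ => x ^ (s + (2*β-1)*n)) (Set.Ioc 0 1) := by
        rw [integrableOn_Ioc_iff_integrableOn_Ioo]
        exact (intervalIntegral.integrableOn_Ioo_rpow_iff one_pos).mpr he
      exact hbase.const_mul _
    refine Integrable.mono' hint (((ckls_continuousOn a b σ β s).mono
      (fun x hx => hx.1)).aestronglyMeasurable measurableSet_Ioc) ?_
    rw [ae_restrict_iff' measurableSet_Ioc]
    refine Filter.Eventually.of_forall (fun x hx => ?_)
    obtain ⟨hx0, hx1⟩ := hx
    have hxs : 0 < x ^ s := Real.rpow_pos_of_pos hx0 _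
    have hEpos : 0 < cklsE a b σ β x := Real.exp_pos _
    have hE : cklsE a b σ β x ≤ Real.exp (-(k * x ^ (1-2*β))) := by
      unfold cklsE
      apply Real.exp_le_exp.mpr
      have hxp : (0:ℝ) ≤ b * x ^ (2-2*β) / (2-2*β) := by
        have := (Real.rpow_pos_of_pos hx0 (2-2*β)).le
        positivity
      have hstep : (2/σ^2) * (a * x ^ (1-2*β) / (1-2*β) - b * x ^ (2-2*β)/(2-2*β))
          ≤ (2/σ^2) * (a * x ^ (1-2*β) / (1-2*β)) := by
        apply mul_le_mul_of_nonneg_left _ hc.le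
        linarith
      refine hstep.trans (le_of_eq ?_)
      have h1' : (1 - 2*β) ≠ 0 := by linarith
      have hq' : (2*β - 1) ≠ 0 := ne_of_gt hq
      rw [hkdef]
      field_simp
      ring
    have hb2 := ckls_exp_neg_le k (1-2*β) hk n hx0
    rw [Real.norm_eq_abs, abs_of_pos (mul_pos hxs hEpos)]
    calc x ^ s * cklsE a b σ β x
        ≤ x ^ s * (((n:ℝ)/k)^n * x ^ (-((1-2*β) * n))) :=
          mul_le_mul_of_nonneg_left (hE.trans hb2) hxs.le
      _ = ((n:ℝ)/k)^n * x ^ (s + (2*β-1)*n) := by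
          rw [show s + (2*β-1)*(n:ℝ) = s + -((1-2*β) * n) by ring,
            Real.rpow_add hx0]
          ring
  · -- on Ioi 1
    obtain ⟨n, hn⟩ := exists_nat_gt ((s + 1) / (2 - 2*β))
    have he : s - (2-2*β)*n < -1 := by
      have := (div_lt_iff₀ h2).mp hn
      nlinarith
    have hint : IntegrableOn
        (fun x : ℝ => ((n:ℝ) / d) ^ n * x ^ (s - (2-2*β)*n)) (Set.Ioi 1) :=
      Integrable.const_mul (integrableOn_Ioi_rpow_of_lt he one_pos) _
    refine Integrable.mono' hint (((ckls_continuousOn a b σ β s).mono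
      (fun x hx => Set.mem_Ioi.mpr (lt_trans one_pos (Set.mem_Ioi.mp hx)))).aestronglyMeasurable measurableSet_Ioi) ?_
    rw [ae_restrict_iff' measurableSet_Ioi]
    refine Filter.Eventually.of_forall (fun x hx => ?_)
    have hx0 : (0:ℝ) < x := lt_trans one_pos hx
    have hxs : 0 < x ^ s := Real.rpow_pos_of_pos hx0 _
    have hEpos : 0 < cklsE a b σ β x := Real.exp_pos _
    have hE : cklsE a b σ β x ≤ Real.exp (-(d * x ^ (2-2*β))) := by
      unfold cklsE
      apply Real.exp_le_exp.mpr
      have hxp : a * x ^ (1-2*β) / (1-2*β) ≤ 0 := by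
        have h3 := (Real.rpow_pos_of_pos hx0 (1-2*β)).le
        apply div_nonpos_of_nonneg_of_nonpos
        · positivity
        · linarith
      have hstep : (2/σ^2) * (a * x ^ (1-2*β) / (1-2*β) - b * x ^ (2-2*β)/(2-2*β))
          ≤ (2/σ^2) * (- (b * x ^ (2-2*β)/(2-2*β))) := by
        apply mul_le_mul_of_nonneg_left _ hc.le
        linarith
      refine hstep.trans (le_of_eq ?_)
      have h2' : (2 - 2*β) ≠ 0 := ne_of_gt h2
      rw [hddef]
      field_simp
    have hb2 := ckls_exp_neg_le d (2-2*β) hd n hx0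
    rw [Real.norm_eq_abs, abs_of_pos (mul_pos hxs hEpos)]
    calc x ^ s * cklsE a b σ β x
        ≤ x ^ s * (((n:ℝ)/d)^n * x ^ (-((2-2*β) * n))) :=
          mul_le_mul_of_nonneg_left (hE.trans hb2) hxs.le
      _ = ((n:ℝ)/d)^n * x ^ (s - (2-2*β)*n) := by
          rw [show s - (2-2*β)*(n:ℝ) = s + -((2-2*β) * n) by ring,
            Real.rpow_add hx0]
          ring

lemma ckls_hasDerivAt (a b σ β : ℝ) (hβ : β ∈ Set.Ioo (1/2 : ℝ) 1) {x : ℝ} (hx : 0 < x) :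
    HasDerivAt (cklsE a b σ β)
      ((2/σ^2) * (a * x ^ (-(2*β)) - b * x ^ (1 - 2*β)) * cklsE a b σ β x) x := by
  obtain ⟨hβ1, hβ2⟩ := hβ
  have h1' : (1 - 2*β) ≠ 0 := by nlinarith
  have h2' : (2 - 2*β) ≠ 0 := by nlinarith
  have hd1 : HasDerivAt (fun x : ℝ => x ^ (1 - 2*β)) ((1 - 2*β) * x ^ (1 - 2*β - 1)) x :=
    Real.hasDerivAt_rpow_const (Or.inl hx.ne')
  have hd2 : HasDerivAt (fun x : ℝ => x ^ (2 - 2*β)) ((2 - 2*β) * x ^ (2 - 2*β - 1)) x :=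
    Real.hasDerivAt_rpow_const (Or.inl hx.ne')
  have hF : HasDerivAt
      (fun x : ℝ => (2/σ^2) * (a * x ^ (1 - 2*β) / (1 - 2*β) - b * x ^ (2 - 2*β) / (2 - 2*β)))
      ((2/σ^2) * (a * x ^ (-(2*β)) - b * x ^ (1 - 2*β))) x := by
    have hder := ((((hd1.const_mul a).div_const (1 - 2*β)).sub
      ((hd2.const_mul b).div_const (2 - 2*β))).const_mul (2/σ^2))
    have heq : (2/σ^2) * (a * x ^ (-(2*β)) - b * x ^ (1 - 2*β)) =
        (2/σ^2) * (a * ((1 - 2*β) * x ^ (1 - 2*β - 1)) / (1 - 2*β)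
          - b * ((2 - 2*β) * x ^ (2 - 2*β - 1)) / (2 - 2*β)) := by
      rw [show (1 - 2*β - 1) = -(2*β) by ring, show (2 - 2*β - 1) = 1 - 2*β by ring,
        mul_comm (1 - 2*β), ← mul_assoc a, mul_div_assoc _ (1 - 2*β), div_self h1', mul_one,
        mul_comm (2 - 2*β), ← mul_assoc b, mul_div_assoc _ (2 - 2*β), div_self h2', mul_one]
    exact heq ▸ hder
  unfold cklsE
  convert hF.exp using 1
  ring

lemma ckls_tendsto_atTop (a b σ β : ℝ) (ha : 0 < a) (hb : 0 < b) (hσ : 0 < σ)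
    (hβ : β ∈ Set.Ioo (1/2 : ℝ) 1) :
    Tendsto (cklsE a b σ β) atTop (𝓝 0) := by
  obtain ⟨hβ1, hβ2⟩ := hβ
  have h2 : 0 < 2 - 2*β := by linarith
  have hq : 0 < 2*β - 1 := by linarith
  have hc : 0 < 2/σ^2 := by positivity
  apply Real.tendsto_exp_atBot.comp
  have hterm1 : Tendsto (fun x : ℝ => (2/σ^2) * (a * x ^ (1 - 2*β) / (1 - 2*β))) atTop (𝓝 0) := by
    have h0 : Tendsto (fun x : ℝ => x ^ (1 - 2*β)) atTop (𝓝 0) := by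
      have := tendsto_rpow_neg_atTop hq
      simpa [show -(2*β - 1) = 1 - 2*β by ring] using this
    have := (h0.const_mul a).div_const (1 - 2*β)
    simpa [mul_comm] using this.const_mul (2/σ^2)
  have hterm2 : Tendsto (fun x : ℝ => (2/σ^2) * (b * x ^ (2 - 2*β) / (2 - 2*β))) atTop atTop := by
    have h0 : Tendsto (fun x : ℝ => x ^ (2 - 2*β)) atTop atTop := tendsto_rpow_atTop h2
    have hpos : 0 < (2/σ^2) * b / (2 - 2*β) := by positivity
    have := h0.const_mul_atTop hpos
    refine this.congr (fun x => ?_)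
    field_simp
  have : Tendsto (fun x : ℝ =>
      (2/σ^2) * (a * x ^ (1 - 2*β) / (1 - 2*β)) - (2/σ^2) * (b * x ^ (2 - 2*β) / (2 - 2*β)))
      atTop atBot := hterm1.add_atBot (tendsto_neg_atTop_atBot.comp hterm2)
  refine this.congr (fun x => ?_)
  ring

lemma ckls_tendsto_zero (a b σ β : ℝ) (ha : 0 < a) (hb : 0 < b) (hσ : 0 < σ)
    (hβ : β ∈ Set.Ioo (1/2 : ℝ) 1) :
    Tendsto (cklsE a b σ β) (𝓝[>] (0:ℝ)) (𝓝 0) := by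
  obtain ⟨hβ1, hβ2⟩ := hβ
  have h2 : 0 < 2 - 2*β := by linarith
  have hq : 0 < 2*β - 1 := by linarith
  have hc : 0 < 2/σ^2 := by positivity
  apply Real.tendsto_exp_atBot.comp
  have hterm1 : Tendsto (fun x : ℝ => (2/σ^2) * (a * x ^ (1 - 2*β) / (1 - 2*β)))
      (𝓝[>] (0:ℝ)) atBot := by
    have h0 : Tendsto (fun x : ℝ => x ^ (1 - 2*β)) (𝓝[>] (0:ℝ)) atTop := by
      have := (tendsto_rpow_atTop hq).comp tendsto_inv_nhdsGT_zero
      apply this.congr'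
      filter_upwards [self_mem_nhdsWithin] with x (hx : (0:ℝ) < x)
      simp only [Function.comp_apply]
      rw [← Real.rpow_neg_one x, ← Real.rpow_mul hx.le,
        show (-1:ℝ) * (2*β - 1) = 1 - 2*β by ring]
    have hneg : (2/σ^2) * a / (1 - 2*β) < 0 := by
      apply div_neg_of_pos_of_neg (by positivity)
      linarith
    have := (tendsto_const_mul_atBot_of_neg hneg).2 h0
    refine this.congr (fun x => ?_)
    field_simp
  have hterm2 : Tendsto (fun x : ℝ => (2/σ^2) * (b * x ^ (2 - 2*β) / (2 - 2*β)))
      (𝓝[>] (0:ℝ)) (𝓝 0) := by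
    have h0 : Tendsto (fun x : ℝ => x ^ (2 - 2*β)) (𝓝[>] (0:ℝ)) (𝓝 0) := by
      have := (Real.continuousAt_rpow_const 0 (2 - 2*β) (Or.inr h2.le)).continuousWithinAt
        (s := Set.Ioi 0)
      simpa [ContinuousWithinAt, Real.zero_rpow (ne_of_gt h2)] using this
    have := (h0.const_mul b).div_const (2 - 2*β)
    simpa [mul_comm] using this.const_mul (2/σ^2)
  have hsum : Tendsto (fun x : ℝ =>
      -((2/σ^2) * (b * x ^ (2 - 2*β) / (2 - 2*β))) + (2/σ^2) * (a * x ^ (1 - 2*β) / (1 - 2*β)))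
      (𝓝[>] (0:ℝ)) atBot := hterm2.neg.add_atBot hterm1
  refine hsum.congr (fun x => ?_)
  ring

/-- the key integral identity -/
lemma ckls_key (a b σ β : ℝ) (ha : 0 < a) (hb : 0 < b) (hσ : 0 < σ)
    (hβ : β ∈ Set.Ioo (1/2 : ℝ) 1) :
    b * (∫ x in Set.Ioi (0:ℝ), x ^ (1 - 2*β) * cklsE a b σ β x)
      = a * (∫ x in Set.Ioi (0:ℝ), x ^ (-(2*β)) * cklsE a b σ β x) := by
  have hc : 0 < 2/σ^2 := by positivity
  set E := cklsE a b σ β with hE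
  set g : ℝ → ℝ := fun x => (2/σ^2) * (a * x ^ (-(2*β)) - b * x ^ (1 - 2*β)) * E x with hg
  have hI0 : IntegrableOn (fun x : ℝ => x ^ (-(2*β)) * E x) (Set.Ioi 0) :=
    ckls_integrable a b σ β ha hb hσ hβ _
  have hI1 : IntegrableOn (fun x : ℝ => x ^ (1 - 2*β) * E x) (Set.Ioi 0) :=
    ckls_integrable a b σ β ha hb hσ hβ _
  have hgint : IntegrableOn g (Set.Ioi 0) := by
    refine IntegrableOn.congr_fun ((hI0.const_mul ((2/σ^2)*a)).sub (hI1.const_mul ((2/σ^2)*b)))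
      (fun x _ => ?_) measurableSet_Ioi
    simp only [Pi.sub_apply, hg]
    ring
  have hIoc01 : Set.Ioc (0:ℝ) 1 ⊆ Set.Ioi 0 := fun x hx => hx.1
  have hIoi1 : Set.Ioi (1:ℝ) ⊆ Set.Ioi 0 := fun x hx => Set.mem_Ioi.mpr (lt_trans one_pos (Set.mem_Ioi.mp hx))
  have hIoi : ∫ x in Set.Ioi (1:ℝ), g x = 0 - E 1 := by
    refine integral_Ioi_of_hasDerivAt_of_tendsto'
      (fun x hx => ckls_hasDerivAt a b σ β hβ (lt_of_lt_of_le one_pos hx))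
      (hgint.mono_set hIoi1) (ckls_tendsto_atTop a b σ β ha hb hσ hβ)
  have hIoc : ∫ x in Set.Ioc (0:ℝ) 1, g x = E 1 := by
    set u : ℕ → ℝ := fun n => ((n:ℝ) + 2)⁻¹ with hu
    have hupos : ∀ n, 0 < u n := fun n => by positivity
    have hule : ∀ n, u n ≤ 1 := fun n => by
      rw [hu]
      have h1 : (1:ℝ) ≤ (n:ℝ) + 2 := by
        have := Nat.cast_nonneg (α := ℝ) n
        linarith
      simpa using inv_le_one_of_one_le₀ h1
    have hmono : Monotone (fun n => Set.Ioc (u n) 1) := by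
      intro m n hmn
      apply Set.Ioc_subset_Ioc_left
      apply inv_anti₀ (by positivity)
      have : (m:ℝ) ≤ (n:ℝ) := Nat.cast_le.mpr hmn
      linarith
    have hUnion : (⋃ n, Set.Ioc (u n) 1) = Set.Ioc (0:ℝ) 1 := by
      ext x
      simp only [Set.mem_iUnion, Set.mem_Ioc]
      constructor
      · rintro ⟨n, h1x, h2x⟩
        exact ⟨lt_trans (hupos n) h1x, h2x⟩
      · rintro ⟨h1x, h2x⟩
        obtain ⟨n, hn⟩ := exists_nat_gt x⁻¹
        refine ⟨n, ?_, h2x⟩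
        rw [hu]
        rw [inv_lt_comm₀ (by positivity) h1x]
        have : (n:ℝ) ≤ (n:ℝ) + 2 := by linarith
        linarith
    have htend := tendsto_setIntegral_of_monotone (fun n => measurableSet_Ioc) hmono
      (hUnion ▸ hgint.mono_set hIoc01)
    rw [hUnion] at htend
    have hFTC : ∀ n, ∫ x in Set.Ioc (u n) 1, g x = E 1 - E (u n) := by
      intro n
      have hderiv : ∀ x ∈ Set.uIcc (u n) 1, HasDerivAt E (g x) x := by
        intro x hx
        rw [Set.uIcc_of_le (hule n)] at hx
        exact ckls_hasDerivAt a b σ β hβ (lt_of_lt_of_le (hupos n) hx.1)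
      have hii : IntervalIntegrable g volume (u n) 1 := by
        rw [intervalIntegrable_iff_integrableOn_Ioc_of_le (hule n)]
        exact hgint.mono_set (fun x hx => lt_trans (hupos n) hx.1)
      have := intervalIntegral.integral_eq_sub_of_hasDerivAt hderiv hii
      rwa [intervalIntegral.integral_of_le (hule n)] at this
    have hu0 : Tendsto u atTop (𝓝[>] (0:ℝ)) := by
      rw [tendsto_nhdsWithin_iff]
      constructor
      · have : Tendsto (fun n : ℕ => (n:ℝ) + 2) atTop atTop :=
          tendsto_atTop_add_const_right _ 2 tendsto_natCast_atTop_atTop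
        exact tendsto_inv_atTop_zero.comp this
      · exact Filter.Eventually.of_forall (fun n => hupos n)
    have hlim : Tendsto (fun n => E 1 - E (u n)) atTop (𝓝 (E 1 - 0)) :=
      tendsto_const_nhds.sub ((ckls_tendsto_zero a b σ β ha hb hσ hβ).comp hu0)
    have hfinal := tendsto_nhds_unique (htend.congr hFTC) hlim
    rw [hfinal, sub_zero]
  have hsplit : ∫ x in Set.Ioi (0:ℝ), g x = 0 := by
    rw [← Set.Ioc_union_Ioi_eq_Ioi (zero_le_one : (0:ℝ) ≤ 1),
      setIntegral_union (Set.Ioc_disjoint_Ioi le_rfl) measurableSet_Ioi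
        (hgint.mono_set hIoc01) (hgint.mono_set hIoi1), hIoc, hIoi]
    ring
  have hlin : ∫ x in Set.Ioi (0:ℝ), g x
      = (2/σ^2) * a * (∫ x in Set.Ioi (0:ℝ), x ^ (-(2*β)) * E x)
        - (2/σ^2) * b * (∫ x in Set.Ioi (0:ℝ), x ^ (1 - 2*β) * E x) := by
    have hcongr : ∫ x in Set.Ioi (0:ℝ), g x
        = ∫ x in Set.Ioi (0:ℝ),
            (((2/σ^2)*a) * (x ^ (-(2*β)) * E x) - ((2/σ^2)*b) * (x ^ (1 - 2*β) * E x)) := by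
      refine setIntegral_congr_fun measurableSet_Ioi (fun x _ => ?_)
      simp only [hg]
      ring
    rw [hcongr, integral_sub (hI0.const_mul _) (hI1.const_mul _),
      integral_const_mul, integral_const_mul]
  have h3 : (2/σ^2) * a * (∫ x in Set.Ioi (0:ℝ), x ^ (-(2*β)) * E x)
      - (2/σ^2) * b * (∫ x in Set.Ioi (0:ℝ), x ^ (1 - 2*β) * E x) = 0 := by
    rw [← hlin, hsplit]
  have hσ2 : (2:ℝ)/σ^2 ≠ 0 := ne_of_gt hc
  apply mul_left_cancel₀ hσ2
  linear_combination -h3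

/-- the mean of the stationary density of the CKLS model equals `a/b`:
`∫₀^∞ x p_∞(x) dx = a/b` where `p_∞(x) = G x^(-2β) E(x)`,
`G = (∫₀^∞ y^(-2β) E(y) dy)⁻¹`. Equivalently,
`b ∫₀^∞ x^(1-2β) E(x) dx = a ∫₀^∞ x^(-2β) E(x) dx`. -/
theorem ckls_stationary_mean (a b σ β : ℝ) (ha : 0 < a) (hb : 0 < b) (hσ : 0 < σ)
    (hβ : β ∈ Set.Ioo (1/2 : ℝ) 1) :
    (∫ x in Set.Ioi (0:ℝ),
        x * ((∫ y in Set.Ioi (0:ℝ), y ^ (-(2*β)) *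
              Real.exp ((2/σ^2) * (a * y ^ (1 - 2*β) / (1 - 2*β) - b * y ^ (2 - 2*β) / (2 - 2*β))))⁻¹ *
          (x ^ (-(2*β)) *
            Real.exp ((2/σ^2) * (a * x ^ (1 - 2*β) / (1 - 2*β) - b * x ^ (2 - 2*β) / (2 - 2*β))))))
      = a / b ∧
    b * (∫ x in Set.Ioi (0:ℝ), x ^ (1 - 2*β) *
          Real.exp ((2/σ^2) * (a * x ^ (1 - 2*β) / (1 - 2*β) - b * x ^ (2 - 2*β) / (2 - 2*β))))
      = a * (∫ x in Set.Ioi (0:ℝ), x ^ (-(2*β)) *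
          Real.exp ((2/σ^2) * (a * x ^ (1 - 2*β) / (1 - 2*β) - b * x ^ (2 - 2*β) / (2 - 2*β)))) := by
  have key := ckls_key a b σ β ha hb hσ hβ
  have hEdef : ∀ x : ℝ, Real.exp ((2/σ^2) *
      (a * x ^ (1 - 2*β) / (1 - 2*β) - b * x ^ (2 - 2*β) / (2 - 2*β))) = cklsE a b σ β x :=
    fun _ => rfl
  constructor
  · simp only [hEdef]
    set I0 := ∫ x in Set.Ioi (0:ℝ), x ^ (-(2*β)) * cklsE a b σ β x with hI0def
    set I1 := ∫ x in Set.Ioi (0:ℝ), x ^ (1 - 2*β) * cklsE a b σ β x with hI1def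
    have hstep : (∫ x in Set.Ioi (0:ℝ), x * (I0⁻¹ * (x ^ (-(2*β)) * cklsE a b σ β x)))
        = I0⁻¹ * I1 := by
      have hcongr : (∫ x in Set.Ioi (0:ℝ), x * (I0⁻¹ * (x ^ (-(2*β)) * cklsE a b σ β x)))
          = ∫ x in Set.Ioi (0:ℝ), I0⁻¹ * (x ^ (1 - 2*β) * cklsE a b σ β x) := by
        refine setIntegral_congr_fun measurableSet_Ioi (fun x hx => ?_)
        have hx0 : (0:ℝ) < x := hx
        rw [show (1:ℝ) - 2*β = 1 + -(2*β) by ring, Real.rpow_add hx0, Real.rpow_one]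
        ring
      rw [hcongr, integral_const_mul, hI1def]
    have hI0pos : 0 < I0 := by
      rw [hI0def]
      rw [setIntegral_pos_iff_support_of_nonneg_ae]
      · refine lt_of_lt_of_le ?_ (measure_mono (fun x (hx : x ∈ Set.Ioi (0:ℝ)) => ?_))
        · rw [Real.volume_Ioi]
          exact ENNReal.zero_lt_top
        · have hx0 : (0:ℝ) < x := hx
          have hEpos : 0 < cklsE a b σ β x := Real.exp_pos _
          have hxp : 0 < x ^ (-(2*β)) := Real.rpow_pos_of_pos hx0 _
          exact ⟨ne_of_gt (mul_pos hxp hEpos), hx⟩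
      · filter_upwards [ae_restrict_mem measurableSet_Ioi] with x hx
        have hx0 : (0:ℝ) < x := hx
        have hEpos : 0 < cklsE a b σ β x := Real.exp_pos _
        have hxp : 0 < x ^ (-(2*β)) := Real.rpow_pos_of_pos hx0 _
        positivity
      · exact ckls_integrable a b σ β ha hb hσ hβ _
    have hI1eq : I1 = a / b * I0 := by
      field_simp
      linear_combination key
    rw [hstep, hI1eq]
    field_simp
  · simp only [hEdef]
    exact key
end

section
/- For all positive real constants a, b, σ and all β ∈ (1/2, 1), the following integration-by-parts identity holds: b·∫₀^∞ x^{3−4β} E(x) dx = σ²·(1−β)·∫₀^∞ x^{1−2β} E(x) dx + a·∫₀^∞ x^{2−4β} E(x) dx, where all three integrals are finite. -/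
open MeasureTheory Set

set_option maxHeartbeats 1000000


private lemma exp_neg_le_aux {c y : ℝ} (hc : 0 < c) (hy : 0 < y) :
    Real.exp (-y) ≤ (c / y) ^ c := by
  rw [Real.rpow_def_of_pos (by positivity), Real.exp_le_exp]
  have h1 : Real.log (y / c) ≤ y / c - 1 := Real.log_le_sub_one_of_pos (by positivity)
  have h2 : Real.log (c / y) = - Real.log (y / c) := by
    rw [← Real.log_inv]; congr 1; field_simp
  rw [h2]
  have h3 := mul_le_mul_of_nonneg_right h1 hc.le
  have h4 : (y / c - 1) * c = y - c := by field_simp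
  linarith

/-- `exp(-(K x^s)) ≤ (c/K)^c * x^(-(s*c))` for positive `K, c, x`. -/
private lemma exp_rpow_bound {K s c x : ℝ} (hK : 0 < K) (hc : 0 < c) (hx : 0 < x) :
    Real.exp (-(K * x ^ s)) ≤ (c / K) ^ c * x ^ (-(s * c)) := by
  have hxs : (0:ℝ) < x ^ s := Real.rpow_pos_of_pos hx s
  have h1 : (0:ℝ) < K * x ^ s := by positivity
  calc Real.exp (-(K * x ^ s)) ≤ (c / (K * x ^ s)) ^ c := exp_neg_le_aux hc h1
    _ = (c / K) ^ c * x ^ (-(s * c)) := by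
        rw [Real.div_rpow hc.le h1.le, Real.mul_rpow hK.le hxs.le,
          ← Real.rpow_mul hx.le, Real.rpow_neg hx.le, Real.div_rpow hc.le hK.le]
        field_simp

private lemma ckls_cont {A B β : ℝ} (p : ℝ) :
    ContinuousOn (fun x : ℝ => x ^ p * Real.exp (-(A * x ^ (1-2*β)) - B * x ^ (2-2*β)))
      (Ioi 0) := by
  intro x hx
  have hx0 : x ≠ 0 := ne_of_gt hx
  have h1 : ContinuousAt (fun x : ℝ => x ^ p) x := Real.continuousAt_rpow_const x p (Or.inl hx0)
  have h2 : ContinuousAt (fun x : ℝ => -(A * x ^ (1-2*β)) - B * x ^ (2-2*β)) x :=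
    (((Real.continuousAt_rpow_const x (1-2*β) (Or.inl hx0)).const_mul A).neg).sub
      ((Real.continuousAt_rpow_const x (2-2*β) (Or.inl hx0)).const_mul B)
  exact (h1.mul (Real.continuous_exp.continuousAt.comp h2)).continuousWithinAt

private lemma ckls_integrableOn {A B β : ℝ} (hA : 0 < A) (hB : 0 < B)
    (hβ1 : 1/2 < β) (hβ2 : β < 1) (p : ℝ) :
    IntegrableOn (fun x : ℝ => x ^ p * Real.exp (-(A * x ^ (1-2*β)) - B * x ^ (2-2*β)))
      (Ioi 0) := by
  have h2b : (0:ℝ) < 2*β - 1 := by linarith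
  have h2b' : (0:ℝ) < 2 - 2*β := by linarith
  have hmeas : Measurable (fun x : ℝ => x ^ p * Real.exp (-(A * x ^ (1-2*β)) - B * x ^ (2-2*β))) := by
    fun_prop
  rw [show Ioi (0:ℝ) = Ioc 0 1 ∪ Ioi 1 from (Ioc_union_Ioi_eq_Ioi zero_le_one).symm]
  apply IntegrableOn.union
  · -- near 0 : bounded
    set c : ℝ := (|p| + 1) / (2*β - 1) with hc_def
    have hc : 0 < c := by positivity
    apply Measure.integrableOn_of_bounded (M := (c / A) ^ c) measure_Ioc_lt_top.ne
      hmeas.aestronglyMeasurable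
    rw [ae_restrict_iff' measurableSet_Ioc]
    filter_upwards with x hx
    obtain ⟨hx0, hx1⟩ := hx
    have hb1 : Real.exp (-(A * x ^ (1-2*β)) - B * x ^ (2-2*β))
        ≤ Real.exp (-(A * x ^ (1-2*β))) := by
      apply Real.exp_le_exp.2
      have : (0:ℝ) ≤ B * x ^ (2-2*β) := by positivity
      linarith
    have hb2 : Real.exp (-(A * x ^ (1-2*β))) ≤ (c / A) ^ c * x ^ (-((1-2*β) * c)) :=
      exp_rpow_bound hA hc hx0
    have hxp : (0:ℝ) < x ^ p := Real.rpow_pos_of_pos hx0 p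
    rw [Real.norm_eq_abs, abs_of_nonneg (by positivity)]
    calc x ^ p * Real.exp (-(A * x ^ (1-2*β)) - B * x ^ (2-2*β))
        ≤ x ^ p * ((c / A) ^ c * x ^ (-((1-2*β) * c))) := by
          apply mul_le_mul_of_nonneg_left (le_trans hb1 hb2) hxp.le
      _ = (c / A) ^ c * x ^ (p + -((1-2*β) * c)) := by
          rw [Real.rpow_add hx0]; ring
      _ ≤ (c / A) ^ c * 1 := by
          apply mul_le_mul_of_nonneg_left _ (by positivity)
          apply Real.rpow_le_one hx0.le hx1
          have : -((1-2*β) * c) = |p| + 1 := by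
            rw [hc_def]; field_simp; ring
          rw [this]
          have := abs_nonneg p
          have := neg_abs_le p
          linarith
      _ = (c / A) ^ c := mul_one _
  · -- near infinity : dominated by x ^ (-2)
    set c : ℝ := (|p| + 2) / (2 - 2*β) with hc_def
    have hc : 0 < c := by positivity
    apply Integrable.mono' (((integrableOn_Ioi_rpow_of_lt (a := -2) (by norm_num) one_pos)).const_mul
      ((c / B) ^ c))
    · exact hmeas.aestronglyMeasurable.restrict
    · rw [ae_restrict_iff' measurableSet_Ioi]
      filter_upwards with x hx
      have hx1 : (1:ℝ) ≤ x := le_of_lt hx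
      have hx0 : (0:ℝ) < x := lt_of_lt_of_le one_pos hx1
      have hb1 : Real.exp (-(A * x ^ (1-2*β)) - B * x ^ (2-2*β))
          ≤ Real.exp (-(B * x ^ (2-2*β))) := by
        apply Real.exp_le_exp.2
        have : (0:ℝ) ≤ A * x ^ (1-2*β) := by positivity
        linarith
      have hb2 : Real.exp (-(B * x ^ (2-2*β))) ≤ (c / B) ^ c * x ^ (-((2-2*β) * c)) :=
        exp_rpow_bound hB hc hx0
      have hxp : (0:ℝ) < x ^ p := Real.rpow_pos_of_pos hx0 p
      rw [Real.norm_eq_abs, abs_of_nonneg (by positivity)]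
      calc x ^ p * Real.exp (-(A * x ^ (1-2*β)) - B * x ^ (2-2*β))
          ≤ x ^ p * ((c / B) ^ c * x ^ (-((2-2*β) * c))) :=
            mul_le_mul_of_nonneg_left (le_trans hb1 hb2) hxp.le
        _ = (c / B) ^ c * x ^ (p + -((2-2*β) * c)) := by
            rw [Real.rpow_add hx0]; ring
        _ ≤ (c / B) ^ c * x ^ (-2 : ℝ) := by
            apply mul_le_mul_of_nonneg_left _ (by positivity)
            apply Real.rpow_le_rpow_of_exponent_le hx1
            have : -((2-2*β) * c) = -(|p| + 2) := by
              rw [hc_def]; field_simp; rw [div_self (show (1:ℝ) - β ≠ 0 by linarith)]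
            rw [this]
            have := le_abs_self p
            linarith

/-- integration-by-parts identity:
`b ∫₀^∞ x^(3-4β) E(x) dx = σ²(1-β) ∫₀^∞ x^(1-2β) E(x) dx + a ∫₀^∞ x^(2-4β) E(x) dx`,
where all three integrals are finite and
`E(x) = exp((2/σ²)(a x^(1-2β)/(1-2β) - b x^(2-2β)/(2-2β)))`. -/
theorem ckls_integration_by_parts (a b σ β : ℝ) (ha : 0 < a) (hb : 0 < b) (hσ : 0 < σ)
    (hβ : β ∈ Set.Ioo (1/2 : ℝ) 1) :
    IntegrableOn (fun x : ℝ => x ^ (3 - 4*β) *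
        Real.exp ((2/σ^2) * (a * x ^ (1 - 2*β) / (1 - 2*β) - b * x ^ (2 - 2*β) / (2 - 2*β))))
      (Set.Ioi (0:ℝ)) ∧
    IntegrableOn (fun x : ℝ => x ^ (1 - 2*β) *
        Real.exp ((2/σ^2) * (a * x ^ (1 - 2*β) / (1 - 2*β) - b * x ^ (2 - 2*β) / (2 - 2*β))))
      (Set.Ioi (0:ℝ)) ∧
    IntegrableOn (fun x : ℝ => x ^ (2 - 4*β) *
        Real.exp ((2/σ^2) * (a * x ^ (1 - 2*β) / (1 - 2*β) - b * x ^ (2 - 2*β) / (2 - 2*β))))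
      (Set.Ioi (0:ℝ)) ∧
    b * (∫ x in Set.Ioi (0:ℝ), x ^ (3 - 4*β) *
          Real.exp ((2/σ^2) * (a * x ^ (1 - 2*β) / (1 - 2*β) - b * x ^ (2 - 2*β) / (2 - 2*β))))
      = σ^2 * (1 - β) * (∫ x in Set.Ioi (0:ℝ), x ^ (1 - 2*β) *
            Real.exp ((2/σ^2) * (a * x ^ (1 - 2*β) / (1 - 2*β) - b * x ^ (2 - 2*β) / (2 - 2*β))))
        + a * (∫ x in Set.Ioi (0:ℝ), x ^ (2 - 4*β) *
            Real.exp ((2/σ^2) * (a * x ^ (1 - 2*β) / (1 - 2*β) - b * x ^ (2 - 2*β) / (2 - 2*β)))) := by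
  obtain ⟨hβ1, hβ2⟩ := hβ
  have hσ2 : (0:ℝ) < σ^2 := by positivity
  have h2b : (0:ℝ) < 2*β - 1 := by linarith
  have h2b' : (0:ℝ) < 2 - 2*β := by linarith
  set A : ℝ := 2*a/(σ^2*(2*β-1)) with hA_def
  set B : ℝ := 2*b/(σ^2*(2-2*β)) with hB_def
  have hA : 0 < A := by rw [hA_def]; positivity
  have hB : 0 < B := by rw [hB_def]; positivity
  have hE : ∀ x : ℝ, (2/σ^2) * (a * x ^ (1 - 2*β) / (1 - 2*β) - b * x ^ (2 - 2*β) / (2 - 2*β))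
      = -(A * x ^ (1 - 2*β)) - B * x ^ (2 - 2*β) := by
    intro x
    rw [hA_def, hB_def]
    have h1 : (1 - 2*β) ≠ 0 := by linarith
    have h2 : (2 - 2*β) ≠ 0 := by linarith
    field_simp
    ring
  simp only [hE]
  have hI1 := ckls_integrableOn hA hB hβ1 hβ2 (1 - 2*β)
  have hI2 := ckls_integrableOn hA hB hβ1 hβ2 (2 - 4*β)
  have hI3 := ckls_integrableOn hA hB hβ1 hβ2 (3 - 4*β)
  refine ⟨ckls_integrableOn hA hB hβ1 hβ2 _, hI1, hI2, ?_⟩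
  -- FTC / integration by parts with u = x^(2-2β), v = E
  have hu : ∀ x ∈ Ioi (0:ℝ), HasDerivAt (fun y : ℝ => y ^ (2 - 2*β))
      ((2 - 2*β) * x ^ (1 - 2*β)) x := by
    intro x hx
    have h := Real.hasDerivAt_rpow_const (x := x) (p := 2 - 2*β) (Or.inl (ne_of_gt hx))
    rwa [show (2 - 2*β - 1 : ℝ) = 1 - 2*β by ring] at h
  have hv : ∀ x ∈ Ioi (0:ℝ), HasDerivAt
      (fun y : ℝ => Real.exp (-(A * y ^ (1 - 2*β)) - B * y ^ (2 - 2*β)))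
      (Real.exp (-(A * x ^ (1 - 2*β)) - B * x ^ (2 - 2*β)) *
        (-(A * ((1 - 2*β) * x ^ (-(2*β)))) - B * ((2 - 2*β) * x ^ (1 - 2*β)))) x := by
    intro x hx
    have hg : HasDerivAt (fun y : ℝ => -(A * y ^ (1 - 2*β)) - B * y ^ (2 - 2*β))
        (-(A * ((1 - 2*β) * x ^ (1 - 2*β - 1))) - B * ((2 - 2*β) * x ^ (2 - 2*β - 1))) x :=
      (((Real.hasDerivAt_rpow_const (Or.inl (ne_of_gt hx))).const_mul A).neg).sub
        ((Real.hasDerivAt_rpow_const (Or.inl (ne_of_gt hx))).const_mul B)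
    have h := hg.exp
    rwa [show (1 - 2*β - 1 : ℝ) = -(2*β) by ring,
      show (2 - 2*β - 1 : ℝ) = 1 - 2*β by ring] at h
  -- the derivative combination, expressed through the three integrable functions
  have heq : EqOn
      (fun x : ℝ => (2 - 2*β) * (x ^ (1 - 2*β) * Real.exp (-(A * x ^ (1 - 2*β)) - B * x ^ (2 - 2*β)))
        + ((A * (2*β - 1)) * (x ^ (2 - 4*β) * Real.exp (-(A * x ^ (1 - 2*β)) - B * x ^ (2 - 2*β)))
          + (-(B * (2 - 2*β))) * (x ^ (3 - 4*β) * Real.exp (-(A * x ^ (1 - 2*β)) - B * x ^ (2 - 2*β)))))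
      ((fun x : ℝ => (2 - 2*β) * x ^ (1 - 2*β)) * (fun x : ℝ => Real.exp (-(A * x ^ (1 - 2*β)) - B * x ^ (2 - 2*β)))
        + (fun x : ℝ => x ^ (2 - 2*β)) * (fun x : ℝ => Real.exp (-(A * x ^ (1 - 2*β)) - B * x ^ (2 - 2*β)) *
            (-(A * ((1 - 2*β) * x ^ (-(2*β)))) - B * ((2 - 2*β) * x ^ (1 - 2*β)))))
      (Ioi (0:ℝ)) := by
    intro x hx
    simp only [Pi.add_apply, Pi.mul_apply]
    rw [show (2 - 4*β : ℝ) = (2 - 2*β) + -(2*β) by ring,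
      show (3 - 4*β : ℝ) = (2 - 2*β) + (1 - 2*β) by ring,
      Real.rpow_add hx, Real.rpow_add hx]
    ring
  have hint_comb : IntegrableOn
      (fun x : ℝ => (2 - 2*β) * (x ^ (1 - 2*β) * Real.exp (-(A * x ^ (1 - 2*β)) - B * x ^ (2 - 2*β)))
        + ((A * (2*β - 1)) * (x ^ (2 - 4*β) * Real.exp (-(A * x ^ (1 - 2*β)) - B * x ^ (2 - 2*β)))
          + (-(B * (2 - 2*β))) * (x ^ (3 - 4*β) * Real.exp (-(A * x ^ (1 - 2*β)) - B * x ^ (2 - 2*β)))))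
      (Ioi (0:ℝ)) :=
    (hI1.const_mul _).add ((hI2.const_mul _).add (hI3.const_mul _))
  have hint : IntegrableOn
      ((fun x : ℝ => (2 - 2*β) * x ^ (1 - 2*β)) * (fun x : ℝ => Real.exp (-(A * x ^ (1 - 2*β)) - B * x ^ (2 - 2*β)))
        + (fun x : ℝ => x ^ (2 - 2*β)) * (fun x : ℝ => Real.exp (-(A * x ^ (1 - 2*β)) - B * x ^ (2 - 2*β)) *
            (-(A * ((1 - 2*β) * x ^ (-(2*β)))) - B * ((2 - 2*β) * x ^ (1 - 2*β)))))
      (Ioi (0:ℝ)) := hint_comb.congr_fun heq measurableSet_Ioi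
  -- limits at the endpoints
  have h_zero : Filter.Tendsto
      ((fun x : ℝ => x ^ (2 - 2*β)) * (fun x : ℝ => Real.exp (-(A * x ^ (1 - 2*β)) - B * x ^ (2 - 2*β))))
      (nhdsWithin 0 (Ioi 0)) (nhds 0) := by
    have hg : Filter.Tendsto (fun x : ℝ => x ^ (2 - 2*β)) (nhdsWithin 0 (Ioi 0)) (nhds 0) := by
      have h := (Real.continuousAt_rpow_const 0 (2 - 2*β) (Or.inr h2b'.le)).tendsto
      rw [Real.zero_rpow h2b'.ne'] at h
      exact h.mono_left nhdsWithin_le_nhds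
    apply squeeze_zero' ?_ ?_ hg
    · filter_upwards [self_mem_nhdsWithin] with x hx
      simp only [Pi.mul_apply]
      exact mul_nonneg (Real.rpow_nonneg (le_of_lt hx) _) (Real.exp_nonneg _)
    · filter_upwards [self_mem_nhdsWithin] with x hx
      simp only [Pi.mul_apply]
      have t1 : (0:ℝ) ≤ A * x ^ (1 - 2*β) := by
        have := Real.rpow_nonneg (le_of_lt (show (0:ℝ) < x from hx)) (1 - 2*β)
        positivity
      have t2 : (0:ℝ) ≤ B * x ^ (2 - 2*β) := by
        have := Real.rpow_nonneg (le_of_lt (show (0:ℝ) < x from hx)) (2 - 2*β)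
        positivity
      calc x ^ (2 - 2*β) * Real.exp (-(A * x ^ (1 - 2*β)) - B * x ^ (2 - 2*β))
          ≤ x ^ (2 - 2*β) * 1 := by
            apply mul_le_mul_of_nonneg_left _ (Real.rpow_nonneg (le_of_lt hx) _)
            rw [Real.exp_le_one_iff]
            linarith
        _ = x ^ (2 - 2*β) := mul_one _
  have h_infty : Filter.Tendsto
      ((fun x : ℝ => x ^ (2 - 2*β)) * (fun x : ℝ => Real.exp (-(A * x ^ (1 - 2*β)) - B * x ^ (2 - 2*β))))
      Filter.atTop (nhds 0) := by
    set c : ℝ := 2 / (2 - 2*β) with hc_def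
    have hc : 0 < c := by positivity
    have hexp : (2 - 2*β) + -((2 - 2*β) * c) = -(2*β) := by
      rw [hc_def]; field_simp; ring
    have hg : Filter.Tendsto (fun x : ℝ => (c / B) ^ c * x ^ (-(2*β))) Filter.atTop (nhds 0) := by
      have h := (tendsto_rpow_neg_atTop (show (0:ℝ) < 2*β by linarith)).const_mul ((c / B) ^ c)
      simpa using h
    apply squeeze_zero' ?_ ?_ hg
    · filter_upwards [Filter.eventually_gt_atTop 0] with x hx
      simp only [Pi.mul_apply]
      exact mul_nonneg (Real.rpow_nonneg (le_of_lt hx) _) (Real.exp_nonneg _)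
    · filter_upwards [Filter.eventually_gt_atTop 0] with x hx
      simp only [Pi.mul_apply]
      have t1 : (0:ℝ) ≤ A * x ^ (1 - 2*β) := by
        have := Real.rpow_nonneg (le_of_lt hx) (1 - 2*β)
        positivity
      calc x ^ (2 - 2*β) * Real.exp (-(A * x ^ (1 - 2*β)) - B * x ^ (2 - 2*β))
          ≤ x ^ (2 - 2*β) * Real.exp (-(B * x ^ (2 - 2*β))) := by
            apply mul_le_mul_of_nonneg_left _ (Real.rpow_nonneg (le_of_lt hx) _)
            apply Real.exp_le_exp.2
            linarith
        _ ≤ x ^ (2 - 2*β) * ((c / B) ^ c * x ^ (-((2 - 2*β) * c))) :=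
            mul_le_mul_of_nonneg_left (exp_rpow_bound hB hc hx) (Real.rpow_nonneg (le_of_lt hx) _)
        _ = (c / B) ^ c * x ^ ((2 - 2*β) + -((2 - 2*β) * c)) := by
            rw [Real.rpow_add hx]; ring
        _ = (c / B) ^ c * x ^ (-(2*β)) := by rw [hexp]
  have key := MeasureTheory.integral_Ioi_deriv_mul_eq_sub hu hv hint h_zero h_infty
  have keq : ∫ x in Ioi (0:ℝ),
      ((2 - 2*β) * (x ^ (1 - 2*β) * Real.exp (-(A * x ^ (1 - 2*β)) - B * x ^ (2 - 2*β)))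
        + ((A * (2*β - 1)) * (x ^ (2 - 4*β) * Real.exp (-(A * x ^ (1 - 2*β)) - B * x ^ (2 - 2*β)))
          + (-(B * (2 - 2*β))) * (x ^ (3 - 4*β) * Real.exp (-(A * x ^ (1 - 2*β)) - B * x ^ (2 - 2*β)))))
      = (0:ℝ) - 0 := by
    rw [MeasureTheory.setIntegral_congr_fun measurableSet_Ioi heq]
    exact key
  have hsum : IntegrableOn
      (fun x : ℝ => (A * (2*β - 1)) * (x ^ (2 - 4*β) * Real.exp (-(A * x ^ (1 - 2*β)) - B * x ^ (2 - 2*β)))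
        + (-(B * (2 - 2*β))) * (x ^ (3 - 4*β) * Real.exp (-(A * x ^ (1 - 2*β)) - B * x ^ (2 - 2*β))))
      (Ioi (0:ℝ)) := (hI2.const_mul _).add (hI3.const_mul _)
  rw [MeasureTheory.integral_add (hI1.const_mul _) hsum,
    MeasureTheory.integral_add (hI2.const_mul _) (hI3.const_mul _),
    MeasureTheory.integral_const_mul, MeasureTheory.integral_const_mul,
    MeasureTheory.integral_const_mul] at keq
  have hA2 : σ^2 * (A * (2*β - 1)) = 2*a := by
    rw [hA_def]; field_simp
  have hB2 : σ^2 * (B * (2 - 2*β)) = 2*b := by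
    rw [hB_def]; field_simp
  linear_combination (-(σ^2)/2) * keq
    + ((∫ x in Ioi (0:ℝ), x ^ (2 - 4*β) * Real.exp (-(A * x ^ (1 - 2*β)) - B * x ^ (2 - 2*β))) / 2) * hA2
    + (-(∫ x in Ioi (0:ℝ), x ^ (3 - 4*β) * Real.exp (-(A * x ^ (1 - 2*β)) - B * x ^ (2 - 2*β))) / 2) * hB2
end

section
/- For all positive real constants a, b, σ and all β ∈ (1/2, 1), the stationary density p_∞ of the CKLS model satisfies ∫₀^∞ x^{3−2β} p_∞(x) dx − (a/b)·∫₀^∞ x^{2−2β} p_∞(x) dx = σ²·(1−β)·a / b², where p_∞(x) = G·x^{−2β}·E(x) and G = (∫₀^∞ y^{−2β} E(y) dy)^{−1}. -/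
open MeasureTheory Set Real Filter

namespace CKLS6

lemma exp_rpow_ge (c p : ℝ) (hc : 0 < c) (k : ℕ) (hk : k ≠ 0) {x : ℝ} (hx : 0 < x) :
    (c * x ^ p / k) ^ k ≤ Real.exp (c * x ^ p) := by
  have ht : 0 < c * x ^ p := mul_pos hc (Real.rpow_pos_of_pos hx p)
  have h1 : c * x ^ p / k ≤ Real.exp (c * x ^ p / k) := by
    have := Real.add_one_le_exp (c * x ^ p / k); linarith
  calc (c * x ^ p / k) ^ k ≤ (Real.exp (c * x ^ p / k)) ^ k := by
        apply pow_le_pow_left₀ (by positivity) h1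
    _ = Real.exp (c * x ^ p) := by
        rw [← Real.exp_nat_mul]; congr 1; field_simp

lemma exp_neg_rpow_le (c p : ℝ) (hc : 0 < c) (k : ℕ) (hk : k ≠ 0) {x : ℝ} (hx : 0 < x) :
    Real.exp (-(c * x ^ p)) ≤ ((k : ℝ) / c) ^ k * x ^ (-(p * k)) := by
  have hxp : 0 < x ^ p := Real.rpow_pos_of_pos hx p
  have ht : 0 < c * x ^ p := mul_pos hc hxp
  have hk' : (0:ℝ) < k := by positivity
  have h1 := exp_rpow_ge c p hc k hk hx
  have h2 : (0:ℝ) < (c * x ^ p / k) ^ k := by positivity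
  have h3 : Real.exp (-(c * x ^ p)) ≤ ((c * x ^ p / k) ^ k)⁻¹ := by
    rw [Real.exp_neg]; exact inv_anti₀ h2 h1
  refine h3.trans_eq ?_
  rw [← inv_pow]
  have : (c * x ^ p / k)⁻¹ = ((k:ℝ)/c) * x ^ (-p) := by
    rw [Real.rpow_neg hx.le]; field_simp
  rw [this, mul_pow, ← Real.rpow_natCast (x ^ (-p)) k, ← Real.rpow_mul hx.le]
  ring_nf

section F
variable {u v A B : ℝ} (hu : u < 0) (hv : 0 < v) (hA : A < 0) (hB : B < 0)

include hu hv hA hB in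
/-- bound near 0 : `x^α * exp (A x^u + B x^v) ≤ C * x` on `(0,1]`. -/
lemma bound_zero (α : ℝ) : ∃ C : ℝ, 0 ≤ C ∧ ∀ x ∈ Ioc (0:ℝ) 1,
    x ^ α * Real.exp (A * x ^ u + B * x ^ v) ≤ C * x := by
  have hA' : (0:ℝ) < -A := by linarith
  obtain ⟨k, hk⟩ := exists_nat_ge ((1 - α) / (-u))
  refine ⟨((k+1 : ℕ) / (-A)) ^ (k+1), by positivity, fun x hx => ?_⟩
  obtain ⟨hx0, hx1⟩ := hx
  have hxu : 0 < x ^ u := Real.rpow_pos_of_pos hx0 u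
  have hxv : 0 < x ^ v := Real.rpow_pos_of_pos hx0 v
  have h1 : Real.exp (A * x ^ u + B * x ^ v) ≤ Real.exp (-((-A) * x ^ u)) := by
    apply Real.exp_le_exp.2; nlinarith
  have h2 := exp_neg_rpow_le (-A) u (by linarith) (k+1) (Nat.succ_ne_zero k) hx0
  have hxa : 0 < x ^ α := Real.rpow_pos_of_pos hx0 α
  calc x ^ α * Real.exp (A * x ^ u + B * x ^ v)
      ≤ x ^ α * (((k+1 : ℕ) / (-A)) ^ (k+1) * x ^ (-(u * (k+1 : ℕ)))) :=
        mul_le_mul_of_nonneg_left (h1.trans h2) hxa.le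
    _ = ((k+1 : ℕ) / (-A)) ^ (k+1) * x ^ (α - u * (k+1 : ℕ)) := by
        rw [mul_left_comm, ← Real.rpow_add hx0, sub_eq_add_neg]
    _ ≤ ((k+1 : ℕ) / (-A)) ^ (k+1) * x ^ (1:ℝ) := by
        apply mul_le_mul_of_nonneg_left _ (by positivity)
        apply Real.rpow_le_rpow_of_exponent_ge hx0 hx1
        have hk1 : ((k:ℝ)+1) ≥ (1 - α) / (-u) := by push_cast; linarith
        have : (1 - α) ≤ (-u) * ((k:ℝ)+1) := by
          rw [ge_iff_le, div_le_iff₀ (by linarith)] at hk1; linarith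
        push_cast; nlinarith
    _ = ((k+1 : ℕ) / (-A)) ^ (k+1) * x := by rw [Real.rpow_one]

include hu hv hA hB in
/-- bound near ∞ : `x^α * exp (A x^u + B x^v) ≤ C * x^(-2)` on `[1,∞)`. -/
lemma bound_top (α : ℝ) : ∃ C : ℝ, 0 ≤ C ∧ ∀ x : ℝ, 1 ≤ x →
    x ^ α * Real.exp (A * x ^ u + B * x ^ v) ≤ C * x ^ (-2 : ℝ) := by
  have hB' : (0:ℝ) < -B := by linarith
  obtain ⟨k, hk⟩ := exists_nat_ge ((α + 2) / v)
  refine ⟨((k+1 : ℕ) / (-B)) ^ (k+1), by positivity, fun x hx1 => ?_⟩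
  have hx0 : (0:ℝ) < x := lt_of_lt_of_le one_pos hx1
  have hxu : 0 < x ^ u := Real.rpow_pos_of_pos hx0 u
  have hxv : 0 < x ^ v := Real.rpow_pos_of_pos hx0 v
  have h1 : Real.exp (A * x ^ u + B * x ^ v) ≤ Real.exp (-((-B) * x ^ v)) := by
    apply Real.exp_le_exp.2; nlinarith
  have h2 := exp_neg_rpow_le (-B) v (by linarith) (k+1) (Nat.succ_ne_zero k) hx0
  have hxa : 0 < x ^ α := Real.rpow_pos_of_pos hx0 α
  calc x ^ α * Real.exp (A * x ^ u + B * x ^ v)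
      ≤ x ^ α * (((k+1 : ℕ) / (-B)) ^ (k+1) * x ^ (-(v * (k+1 : ℕ)))) :=
        mul_le_mul_of_nonneg_left (h1.trans h2) hxa.le
    _ = ((k+1 : ℕ) / (-B)) ^ (k+1) * x ^ (α - v * (k+1 : ℕ)) := by
        rw [mul_left_comm, ← Real.rpow_add hx0, sub_eq_add_neg]
    _ ≤ ((k+1 : ℕ) / (-B)) ^ (k+1) * x ^ (-2 : ℝ) := by
        apply mul_le_mul_of_nonneg_left _ (by positivity)
        apply Real.rpow_le_rpow_of_exponent_le hx1
        have hk1 : ((k:ℝ)+1) ≥ (α + 2) / v := by push_cast; linarith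
        have : (α + 2) ≤ v * ((k:ℝ)+1) := by
          rw [ge_iff_le, div_le_iff₀ hv] at hk1; linarith
        push_cast; nlinarith

include hu hv hA hB in
lemma contOn (α : ℝ) : ContinuousOn
    (fun x : ℝ => x ^ α * Real.exp (A * x ^ u + B * x ^ v)) (Ioi 0) := by
  apply ContinuousOn.mul
  · exact fun x hx => (Real.continuousAt_rpow_const x α (Or.inl (ne_of_gt hx))).continuousWithinAt
  · apply Continuous.comp_continuousOn Real.continuous_exp
    apply ContinuousOn.add
    · exact continuousOn_const.mul fun x hx =>
        (Real.continuousAt_rpow_const x u (Or.inl (ne_of_gt hx))).continuousWithinAt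
    · exact continuousOn_const.mul fun x hx =>
        (Real.continuousAt_rpow_const x v (Or.inl (ne_of_gt hx))).continuousWithinAt

include hu hv hA hB in
lemma integrableOn_rpow_mul_F (α : ℝ) : IntegrableOn
    (fun x : ℝ => x ^ α * Real.exp (A * x ^ u + B * x ^ v)) (Ioi 0) := by
  have hmeas : ∀ s : Set ℝ, MeasurableSet s → s ⊆ Ioi 0 → AEStronglyMeasurable
      (fun x : ℝ => x ^ α * Real.exp (A * x ^ u + B * x ^ v)) (volume.restrict s) :=
    fun s hs hsub => ((contOn hu hv hA hB α).mono hsub).aestronglyMeasurable hs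
  rw [← Ioc_union_Ioi_eq_Ioi (zero_le_one' ℝ)]
  apply IntegrableOn.union
  · obtain ⟨C, hC0, hC⟩ := bound_zero hu hv hA hB α
    apply Integrable.mono' (g := fun _ : ℝ => C)
        (integrableOn_const measure_Ioc_lt_top.ne)
        (hmeas _ measurableSet_Ioc (Ioc_subset_Ioi_self))
    filter_upwards [ae_restrict_mem measurableSet_Ioc] with x hx
    obtain ⟨hx0, hx1⟩ := hx
    rw [Real.norm_eq_abs, abs_of_nonneg (by positivity)]
    exact (hC x ⟨hx0, hx1⟩).trans (by nlinarith)
  · obtain ⟨C, hC0, hC⟩ := bound_top hu hv hA hB α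
    apply Integrable.mono' (g := fun x : ℝ => C * x ^ (-2 : ℝ))
        ((integrableOn_Ioi_rpow_of_lt (by norm_num) one_pos).const_mul C)
        (hmeas _ measurableSet_Ioi (Ioi_subset_Ioi zero_le_one))
    filter_upwards [ae_restrict_mem measurableSet_Ioi] with x hx
    have hx0 : (0:ℝ) < x := lt_trans one_pos hx
    rw [Real.norm_eq_abs, abs_of_nonneg (by positivity)]
    exact hC x (le_of_lt hx)

include hu hv hA hB in
lemma tendsto_zero_F (α : ℝ) : Tendsto
    (fun x : ℝ => x ^ α * Real.exp (A * x ^ u + B * x ^ v)) (nhdsWithin 0 (Ioi 0)) (nhds 0) := by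
  obtain ⟨C, hC0, hC⟩ := bound_zero hu hv hA hB α
  have h1 : Tendsto (fun x : ℝ => C * x) (nhdsWithin 0 (Ioi 0)) (nhds 0) := by
    have h2 : Tendsto (fun x : ℝ => C * x) (nhds 0) (nhds (C * 0)) :=
      (continuous_const.mul continuous_id).tendsto 0
    rw [mul_zero] at h2
    exact h2.mono_left nhdsWithin_le_nhds
  apply squeeze_zero'
  · filter_upwards [self_mem_nhdsWithin] with x hx
    have hx0 : (0:ℝ) < x := hx; positivity
  · filter_upwards [Ioc_mem_nhdsGT one_pos] with x hx
    exact hC x hx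
  · exact h1

include hu hv hA hB in
lemma tendsto_top_F (α : ℝ) : Tendsto
    (fun x : ℝ => x ^ α * Real.exp (A * x ^ u + B * x ^ v)) atTop (nhds 0) := by
  obtain ⟨C, hC0, hC⟩ := bound_top hu hv hA hB α
  have h1 : Tendsto (fun x : ℝ => C * x ^ (-2:ℝ)) atTop (nhds 0) := by
    simpa using (tendsto_rpow_neg_atTop (by norm_num : (0:ℝ) < 2)).const_mul C
  apply squeeze_zero'
  · filter_upwards [eventually_gt_atTop 0] with x hx; positivity
  · filter_upwards [eventually_ge_atTop 1] with x hx; exact hC x hx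
  · exact h1



lemma ftc_zero (f f' : ℝ → ℝ) (h0 : f 0 = 0)
    (hd : ∀ x ∈ Ioi (0:ℝ), HasDerivAt f (f' x) x)
    (hint : IntegrableOn f' (Ioi 0))
    (hlim0 : Tendsto f (nhdsWithin 0 (Ioi 0)) (nhds 0))
    (hlimtop : Tendsto f atTop (nhds 0)) :
    ∫ x in Ioi (0:ℝ), f' x = 0 := by
  have hcont : ContinuousWithinAt f (Ici 0) 0 := by
    rw [ContinuousWithinAt, h0, show (Ici (0:ℝ)) = insert 0 (Ioi 0) by
      rw [Ioi_insert]]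
    rw [nhdsWithin_insert]
    rw [tendsto_sup]
    constructor
    · simpa [h0] using tendsto_pure_nhds f 0
    · exact hlim0
  have := integral_Ioi_of_hasDerivAt_of_tendsto hcont hd hint hlimtop
  simpa [h0] using this

include hu hv hA hB in
lemma identity1 :
    A * u * (∫ x in Ioi (0:ℝ), x ^ (u-1) * Real.exp (A * x ^ u + B * x ^ v))
      + B * v * (∫ x in Ioi (0:ℝ), x ^ (v-1) * Real.exp (A * x ^ u + B * x ^ v)) = 0 := by
  have hE := integrableOn_rpow_mul_F hu hv hA hB
  set f : ℝ → ℝ := fun x => if x = 0 then 0 else Real.exp (A * x ^ u + B * x ^ v) with hf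
  set f' : ℝ → ℝ := fun x => A * u * (x ^ (u-1) * Real.exp (A * x ^ u + B * x ^ v))
      + B * v * (x ^ (v-1) * Real.exp (A * x ^ u + B * x ^ v)) with hf'
  have hint : IntegrableOn f' (Ioi 0) := ((hE (u-1)).const_mul _).add ((hE (v-1)).const_mul _)
  have hd : ∀ x ∈ Ioi (0:ℝ), HasDerivAt f (f' x) x := by
    intro x hx
    have hx0 : x ≠ 0 := ne_of_gt hx
    have h1 : HasDerivAt (fun y : ℝ => A * y ^ u) (A * (u * x ^ (u-1))) x :=
      (Real.hasDerivAt_rpow_const (Or.inl hx0)).const_mul A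
    have h2 : HasDerivAt (fun y : ℝ => B * y ^ v) (B * (v * x ^ (v-1))) x :=
      (Real.hasDerivAt_rpow_const (Or.inl hx0)).const_mul B
    have h3 := (h1.add h2).exp
    have h4 : HasDerivAt f
        (Real.exp (A * x ^ u + B * x ^ v) * (A * (u * x ^ (u-1)) + B * (v * x ^ (v-1)))) x := by
      apply h3.congr_of_eventuallyEq
      filter_upwards [eventually_ne_nhds hx0] with y hy
      simp [hf, hy]
    convert h4 using 1
    simp only [hf']; ring
  have hl0 : Tendsto f (nhdsWithin 0 (Ioi 0)) (nhds 0) := by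
    apply (tendsto_zero_F hu hv hA hB 0).congr'
    filter_upwards [self_mem_nhdsWithin] with x (hx : x ∈ Ioi 0)
    simp [hf, ne_of_gt (mem_Ioi.1 hx), Real.rpow_zero]
  have hltop : Tendsto f atTop (nhds 0) := by
    apply (tendsto_top_F hu hv hA hB 0).congr'
    filter_upwards [eventually_gt_atTop 0] with x hx
    simp [hf, ne_of_gt hx, Real.rpow_zero]
  have h0 : f 0 = 0 := by simp [hf]
  have hkey := ftc_zero f f' h0 hd hint hl0 hltop
  rw [hf'] at hkey
  rw [integral_add ((hE (u-1)).const_mul _) ((hE (v-1)).const_mul _),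
    integral_const_mul, integral_const_mul] at hkey
  exact hkey

include hu hv hA hB in
lemma identity2 :
    v * (∫ x in Ioi (0:ℝ), x ^ (v-1) * Real.exp (A * x ^ u + B * x ^ v))
      + A * u * (∫ x in Ioi (0:ℝ), x ^ (u+v-1) * Real.exp (A * x ^ u + B * x ^ v))
      + B * v * (∫ x in Ioi (0:ℝ), x ^ (2*v-1) * Real.exp (A * x ^ u + B * x ^ v)) = 0 := by
  have hE := integrableOn_rpow_mul_F hu hv hA hB
  set f : ℝ → ℝ := fun x => x ^ v * Real.exp (A * x ^ u + B * x ^ v) with hf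
  set f' : ℝ → ℝ := fun x => v * (x ^ (v-1) * Real.exp (A * x ^ u + B * x ^ v))
      + A * u * (x ^ (u+v-1) * Real.exp (A * x ^ u + B * x ^ v))
      + B * v * (x ^ (2*v-1) * Real.exp (A * x ^ u + B * x ^ v)) with hf'
  have hint : IntegrableOn f' (Ioi 0) :=
    (((hE (v-1)).const_mul _).add ((hE (u+v-1)).const_mul _)).add ((hE (2*v-1)).const_mul _)
  have hd : ∀ x ∈ Ioi (0:ℝ), HasDerivAt f (f' x) x := by
    intro x hx
    have hxpos : (0:ℝ) < x := hx
    have hx0 : x ≠ 0 := ne_of_gt hx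
    have h1 : HasDerivAt (fun y : ℝ => A * y ^ u) (A * (u * x ^ (u-1))) x :=
      (Real.hasDerivAt_rpow_const (Or.inl hx0)).const_mul A
    have h2 : HasDerivAt (fun y : ℝ => B * y ^ v) (B * (v * x ^ (v-1))) x :=
      (Real.hasDerivAt_rpow_const (Or.inl hx0)).const_mul B
    have h3 := (h1.add h2).exp
    have h5 : HasDerivAt (fun y : ℝ => y ^ v) (v * x ^ (v-1)) x :=
      Real.hasDerivAt_rpow_const (Or.inl hx0)
    have h6 : HasDerivAt (fun y : ℝ => y ^ v * Real.exp (A * y ^ u + B * y ^ v))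
        (v * x ^ (v-1) * Real.exp (A * x ^ u + B * x ^ v) + x ^ v * (Real.exp (A * x ^ u + B * x ^ v) *
          (A * (u * x ^ (u-1)) + B * (v * x ^ (v-1))))) x := h5.mul h3
    convert h6 using 1
    have e1 : x ^ (u+v-1) = x ^ v * x ^ (u-1) := by
      rw [show u+v-1 = v + (u-1) by ring, Real.rpow_add hxpos]
    have e2 : x ^ (2*v-1) = x ^ v * x ^ (v-1) := by
      rw [show 2*v-1 = v + (v-1) by ring, Real.rpow_add hxpos]
    simp only [hf']
    rw [e1, e2]; ring
  have hl0 : Tendsto f (nhdsWithin 0 (Ioi 0)) (nhds 0) := tendsto_zero_F hu hv hA hB v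
  have hltop : Tendsto f atTop (nhds 0) := tendsto_top_F hu hv hA hB v
  have h0 : f 0 = 0 := by simp [hf, Real.zero_rpow (ne_of_gt hv)]
  have hkey := ftc_zero f f' h0 hd hint hl0 hltop
  rw [hf'] at hkey
  have h12 : IntegrableOn (fun x : ℝ => v * (x ^ (v-1) * Real.exp (A * x ^ u + B * x ^ v))
      + A * u * (x ^ (u+v-1) * Real.exp (A * x ^ u + B * x ^ v))) (Ioi 0) :=
    ((hE (v-1)).const_mul _).add ((hE (u+v-1)).const_mul _)
  rw [integral_add h12 ((hE (2*v-1)).const_mul _),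
    integral_add ((hE (v-1)).const_mul _) ((hE (u+v-1)).const_mul _),
    integral_const_mul, integral_const_mul, integral_const_mul] at hkey
  exact hkey

include hu hv hA hB in
lemma Jpos (α : ℝ) : 0 < ∫ x in Ioi (0:ℝ), x ^ α * Real.exp (A * x ^ u + B * x ^ v) := by
  have hsub : Ioi (0:ℝ) ⊆
      (Function.support fun x : ℝ => x ^ α * Real.exp (A * x ^ u + B * x ^ v)) ∩ Ioi 0 := by
    intro x hx
    have hx0 : (0:ℝ) < x := hx
    have hpos : 0 < x ^ α * Real.exp (A * x ^ u + B * x ^ v) := by positivity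
    exact ⟨Function.mem_support.2 (ne_of_gt hpos), hx⟩
  rw [setIntegral_pos_iff_support_of_nonneg_ae]
  · refine lt_of_lt_of_le ?_ (measure_mono hsub)
    simp [Real.volume_Ioi]
  · filter_upwards [ae_restrict_mem measurableSet_Ioi] with x hx
    have hx0 : (0:ℝ) < x := hx
    positivity
  · exact integrableOn_rpow_mul_F hu hv hA hB α


end F
end CKLS6

open CKLS6 in
/-- the stationary density `p_∞(x) = G x^(-2β) E(x)` of the CKLS model,
with `G = (∫₀^∞ y^(-2β) E(y) dy)⁻¹`, satisfies
`∫₀^∞ x^(3-2β) p_∞(x) dx - (a/b) ∫₀^∞ x^(2-2β) p_∞(x) dx = σ²(1-β)a/b²`. -/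
theorem ckls_stationary_moment_identity (a b σ β : ℝ) (ha : 0 < a) (hb : 0 < b) (hσ : 0 < σ)
    (hβ : β ∈ Set.Ioo (1/2 : ℝ) 1) :
    (∫ x in Set.Ioi (0:ℝ),
        x ^ (3 - 2*β) * ((∫ y in Set.Ioi (0:ℝ), y ^ (-(2*β)) *
              Real.exp ((2/σ^2) * (a * y ^ (1 - 2*β) / (1 - 2*β) - b * y ^ (2 - 2*β) / (2 - 2*β))))⁻¹ *
          (x ^ (-(2*β)) *
            Real.exp ((2/σ^2) * (a * x ^ (1 - 2*β) / (1 - 2*β) - b * x ^ (2 - 2*β) / (2 - 2*β))))))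
      - (a / b) * (∫ x in Set.Ioi (0:ℝ),
        x ^ (2 - 2*β) * ((∫ y in Set.Ioi (0:ℝ), y ^ (-(2*β)) *
              Real.exp ((2/σ^2) * (a * y ^ (1 - 2*β) / (1 - 2*β) - b * y ^ (2 - 2*β) / (2 - 2*β))))⁻¹ *
          (x ^ (-(2*β)) *
            Real.exp ((2/σ^2) * (a * x ^ (1 - 2*β) / (1 - 2*β) - b * x ^ (2 - 2*β) / (2 - 2*β))))))
      = σ^2 * (1 - β) * a / b^2 := by
  obtain ⟨hβ1, hβ2⟩ := hβ
  have hσ2 : (0:ℝ) < σ^2 := by positivity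
  set u : ℝ := 1 - 2*β with hu_def
  set v : ℝ := 2 - 2*β with hv_def
  have hu : u < 0 := by rw [hu_def]; linarith
  have hv : 0 < v := by rw [hv_def]; linarith
  set A : ℝ := 2/σ^2 * a / u with hA_def
  set B : ℝ := -(2/σ^2 * b / v) with hB_def
  have hA : A < 0 := by
    rw [hA_def]; apply div_neg_of_pos_of_neg (by positivity) hu
  have hB : B < 0 := by
    rw [hB_def]; simp only [neg_neg, neg_lt, neg_zero]; positivity
  have hEeq : ∀ x : ℝ,
      Real.exp ((2/σ^2) * (a * x ^ u / u - b * x ^ v / v)) =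
        Real.exp (A * x ^ u + B * x ^ v) := by
    intro x; congr 1
    rw [hA_def, hB_def]; ring
  set J : ℝ → ℝ := fun α => ∫ x in Set.Ioi (0:ℝ), x ^ α * Real.exp (A * x ^ u + B * x ^ v)
    with hJ_def
  have hexp0 : -(2*β) = u - 1 := by rw [hu_def]; ring
  -- the inner normalizing integral
  have hK : (∫ y in Set.Ioi (0:ℝ), y ^ (-(2*β)) *
      Real.exp ((2/σ^2) * (a * y ^ u / u - b * y ^ v / v))) = J (u-1) := by
    rw [hJ_def]
    simp only [hEeq, hexp0]
  have hJ0pos : 0 < J (u-1) := Jpos hu hv hA hB (u-1)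
  have hJ0 : J (u-1) ≠ 0 := ne_of_gt hJ0pos
  -- rewrite the two outer integrals
  have hI1 : (∫ x in Set.Ioi (0:ℝ), x ^ (3 - 2*β) * ((J (u-1))⁻¹ *
      (x ^ (-(2*β)) * Real.exp ((2/σ^2) * (a * x ^ u / u - b * x ^ v / v)))))
      = (J (u-1))⁻¹ * J (2*v-1) := by
    rw [hJ_def, ← integral_const_mul]
    apply setIntegral_congr_fun measurableSet_Ioi
    intro x hx
    have hx0 : (0:ℝ) < x := hx
    simp only [hEeq, hexp0]
    rw [show (2*v-1 : ℝ) = (3-2*β) + (u-1) by rw [hu_def, hv_def]; ring,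
      Real.rpow_add hx0]
    ring
  have hI2 : (∫ x in Set.Ioi (0:ℝ), x ^ (2 - 2*β) * ((J (u-1))⁻¹ *
      (x ^ (-(2*β)) * Real.exp ((2/σ^2) * (a * x ^ u / u - b * x ^ v / v)))))
      = (J (u-1))⁻¹ * J (u+v-1) := by
    rw [hJ_def, ← integral_const_mul]
    apply setIntegral_congr_fun measurableSet_Ioi
    intro x hx
    have hx0 : (0:ℝ) < x := hx
    simp only [hEeq, hexp0]
    rw [show (u+v-1 : ℝ) = (2-2*β) + (u-1) by rw [hu_def, hv_def]; ring,
      Real.rpow_add hx0]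
    ring
  rw [hK, hI1, hI2]
  -- the two integration-by-parts identities
  have id1 := identity1 hu hv hA hB
  have id2 := identity2 hu hv hA hB
  rw [show v - 1 = u by rw [hu_def, hv_def]; ring] at id1 id2
  have id1' : A * u * J (u-1) + B * v * J u = 0 := id1
  have id2' : v * J u + A * u * J (u+v-1) + B * v * J (2*v-1) = 0 := id2
  clear id1 id2
  rename' id1' => id1, id2' => id2
  have hAu : A * u = 2/σ^2 * a := by
    rw [hA_def, div_mul_cancel₀ _ (ne_of_lt hu)]
  have hBv : B * v = -(2/σ^2 * b) := by
    rw [hB_def, neg_mul, div_mul_cancel₀ _ (ne_of_gt hv)]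
  rw [hAu, hBv] at id1 id2
  -- id1 : 2/σ^2*a * J (u-1) + (-(2/σ^2*b)) * J u = 0
  -- id2 : v * J u + 2/σ^2*a * J (u+v-1) + (-(2/σ^2*b)) * J (2*v-1) = 0
  have e1 : a * J (u-1) = b * J u := by
    have hσ2' : σ^2 ≠ 0 := ne_of_gt hσ2
    field_simp at id1
    linarith
  have e2 : b * J (2*v-1) - a * J (u+v-1) = σ^2 * (1-β) * J u := by
    have hσ2' : σ^2 ≠ 0 := ne_of_gt hσ2
    have hv' : v = 2 - 2*β := hv_def
    field_simp at id2
    rw [show v * 2 - 1 = 2 * v - 1 by ring] at id2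
    linear_combination (-(1/2)) * id2 + (σ^2 * J u / 2) * hv'
  have hb' : b ≠ 0 := ne_of_gt hb
  have key : b^2 * J (2*v-1) - a * b * J (u+v-1) = σ^2 * (1-β) * a * J (u-1) := by
    linear_combination b * e2 - σ^2*(1-β) * e1
  have key2 : J (2*v-1) - a/b * J (u+v-1) = σ^2 * (1-β) * a / b^2 * J (u-1) := by
    apply mul_left_cancel₀ (pow_ne_zero 2 hb')
    field_simp
    linear_combination key
  calc (J (u-1))⁻¹ * J (2*v-1) - a/b * ((J (u-1))⁻¹ * J (u+v-1))
      = (J (u-1))⁻¹ * (J (2*v-1) - a/b * J (u+v-1)) := by ring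
    _ = (J (u-1))⁻¹ * (σ^2 * (1-β) * a / b^2 * J (u-1)) := by rw [key2]
    _ = σ^2 * (1-β) * a / b^2 := by field_simp
end

section
/- For all positive real constants a, b, σ and all β ∈ (1/2, 1), the scale density of the CKLS diffusion is not integrable at 0: ∫₀^1 exp(−(2/σ²)·(a·x^{1−2β}/(1−2β) − b·x^{2−2β}/(2−2β))) dx = +∞. (This divergence is the key ingredient in Feller's test for explosions showing that the CKLS process never reaches 0, i.e. stays strictly positive.) -/
open MeasureTheory Set

lemma aux_inv_lintegral_top :
    ∫⁻ x in Set.Ioo (0:ℝ) 1, ENNReal.ofReal (x ^ (-1:ℝ)) = ⊤ := by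
  by_contra h
  have hm : AEStronglyMeasurable (fun x : ℝ => x ^ (-1:ℝ))
      (volume.restrict (Set.Ioo 0 1)) := by fun_prop
  have hpos : 0 ≤ᵐ[volume.restrict (Set.Ioo (0:ℝ) 1)] fun x : ℝ => x ^ (-1:ℝ) := by
    filter_upwards [ae_restrict_mem measurableSet_Ioo] with x hx
    exact (Real.rpow_pos_of_pos hx.1 _).le
  have hint : IntegrableOn (fun x : ℝ => x ^ (-1:ℝ)) (Set.Ioo 0 1) := by
    refine ⟨hm, ?_⟩
    rw [hasFiniteIntegral_iff_ofReal hpos]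
    exact lt_top_iff_ne_top.2 h
  rw [intervalIntegral.integrableOn_Ioo_rpow_iff zero_lt_one] at hint
  linarith

/-- the scale density of the CKLS diffusion is not integrable at `0`:
`∫₀^1 exp(-(2/σ²)(a x^(1-2β)/(1-2β) - b x^(2-2β)/(2-2β))) dx = +∞`. -/
theorem ckls_scale_density_not_integrable_at_zero (a b σ β : ℝ)
    (ha : 0 < a) (hb : 0 < b) (hσ : 0 < σ) (hβ : β ∈ Set.Ioo (1/2 : ℝ) 1) :
    ∫⁻ x in Set.Ioo (0:ℝ) 1,
      ENNReal.ofReal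
        (Real.exp (-(2/σ^2) * (a * x ^ (1 - 2*β) / (1 - 2*β) - b * x ^ (2 - 2*β) / (2 - 2*β))))
      = ⊤ := by
  obtain ⟨hβ1, hβ2⟩ := hβ
  have hd : (0:ℝ) < 2*β - 1 := by linarith
  have he : (0:ℝ) < 2 - 2*β := by linarith
  have hσ2 : (0:ℝ) < σ^2 := by positivity
  set c : ℝ := 2*a/(σ^2*(2*β-1)) with hc_def
  have hc : 0 < c := by positivity
  set n : ℕ := ⌈1/(2*β-1)⌉₊ with hn_def
  have hn1 : (1:ℝ)/(2*β-1) ≤ n := Nat.le_ceil _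
  have hnpos : 0 < n := by
    rcases Nat.eq_zero_or_pos n with h0 | h
    · exfalso; rw [h0] at hn1; push_cast at hn1
      have : 0 < 1/(2*β-1) := by positivity
      linarith
    · exact h
  have hnR : (0:ℝ) < n := by exact_mod_cast hnpos
  have hnd : 1 ≤ (n:ℝ) * (2*β-1) := by
    rw [div_le_iff₀ hd] at hn1; linarith
  set K : ℝ := (c/n)^n with hK_def
  have hK : 0 < K := by positivity
  -- pointwise bound
  have key : ∀ x ∈ Set.Ioo (0:ℝ) 1,
      K * x ^ (-1:ℝ) ≤
        Real.exp (-(2/σ^2) * (a * x ^ (1 - 2*β) / (1 - 2*β) - b * x ^ (2 - 2*β) / (2 - 2*β))) := by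
    intro x hx
    obtain ⟨hx0, hx1⟩ := hx
    have hu : 0 < x ^ (1 - 2*β) := Real.rpow_pos_of_pos hx0 _
    have hv : 0 < x ^ (2 - 2*β) := Real.rpow_pos_of_pos hx0 _
    -- step 1 : x^(-1) ≤ x^(n*(1-2β))
    have h1 : x ^ (-1:ℝ) ≤ x ^ ((n:ℝ) * (1 - 2*β)) := by
      apply Real.rpow_le_rpow_of_exponent_ge hx0 hx1.le
      nlinarith
    -- step 2 : K * x^(n*(1-2β)) = (c/n * x^(1-2β))^n
    have h2 : K * x ^ ((n:ℝ) * (1 - 2*β)) = (c/n * x ^ (1 - 2*β))^n := by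
      rw [mul_pow, ← Real.rpow_natCast (x ^ (1 - 2*β)) n, ← Real.rpow_mul hx0.le]
      rw [hK_def]
      ring_nf
    -- step 3 : (c/n * x^(1-2β))^n ≤ exp (c * x^(1-2β))
    have h3 : (c/n * x ^ (1 - 2*β))^n ≤ Real.exp (c * x ^ (1 - 2*β)) := by
      have ht : 0 ≤ c/n * x ^ (1 - 2*β) := by positivity
      have hle : c/n * x ^ (1 - 2*β) ≤ Real.exp (c/n * x ^ (1 - 2*β)) := by
        have := Real.add_one_le_exp (c/n * x ^ (1 - 2*β)); linarith
      calc (c/n * x ^ (1 - 2*β))^n ≤ (Real.exp (c/n * x ^ (1 - 2*β)))^n :=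
            pow_le_pow_left₀ ht hle n
        _ = Real.exp ((n:ℝ) * (c/n * x ^ (1 - 2*β))) := by
            rw [← Real.exp_nat_mul]
        _ = Real.exp (c * x ^ (1 - 2*β)) := by
            congr 1; field_simp
    -- step 4 : c * x^(1-2β) ≤ F x
    have h4 : c * x ^ (1 - 2*β) ≤
        -(2/σ^2) * (a * x ^ (1 - 2*β) / (1 - 2*β) - b * x ^ (2 - 2*β) / (2 - 2*β)) := by
      have heq : -(2/σ^2) * (a * x ^ (1 - 2*β) / (1 - 2*β) - b * x ^ (2 - 2*β) / (2 - 2*β))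
          = c * x ^ (1 - 2*β) + 2*b/(σ^2*(2-2*β)) * x ^ (2 - 2*β) := by
        have h12 : (1 - 2*β) ≠ 0 := by linarith
        have h22 : (2 - 2*β) ≠ 0 := by linarith
        rw [hc_def]
        field_simp
        ring
      rw [heq]
      nlinarith [mul_pos (div_pos (by linarith : (0:ℝ) < 2*b) (by positivity : (0:ℝ) < σ^2*(2-2*β))) hv]
    calc K * x ^ (-1:ℝ) ≤ K * x ^ ((n:ℝ) * (1 - 2*β)) := by
          apply mul_le_mul_of_nonneg_left h1 hK.le
      _ = (c/n * x ^ (1 - 2*β))^n := h2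
      _ ≤ Real.exp (c * x ^ (1 - 2*β)) := h3
      _ ≤ _ := Real.exp_le_exp.2 h4
  -- lower bound integral is ⊤
  have hlow : ∫⁻ x in Set.Ioo (0:ℝ) 1, ENNReal.ofReal (K * x ^ (-1:ℝ)) = ⊤ := by
    simp_rw [ENNReal.ofReal_mul hK.le]
    rw [lintegral_const_mul _ (by fun_prop : Measurable fun x : ℝ => ENNReal.ofReal (x ^ (-1:ℝ)))]
    rw [aux_inv_lintegral_top, ENNReal.mul_top (by simpa using hK)]
  refine top_unique ?_
  rw [← hlow]
  refine setLIntegral_mono (by fun_prop) fun x hx => ?_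
  exact ENNReal.ofReal_le_ofReal (key x hx)
end

section
/- Let σ > 0, β ∈ (1/2, 1), and let r : [0, ∞) → ℝ be continuous with r(s) > 0 for all s; define Q(t) = σ²·∫₀^t r(s)^{2β} ds. Let t₁, …, t_m ≥ 0 be points such that Σ_{i=1}^m |log r(t_i)| > 0. Then the estimator β̂₁(h) = (Σ_{i=1}^m |log((Q(t_i+h) − Q(t_i))/(σ²·h))|) / (2·Σ_{i=1}^m |log r(t_i)|) converges to β as h → 0⁺. -/
open MeasureTheory Set Filter Topology

lemma aux_avg_tendsto (f : ℝ → ℝ) (hf : Continuous f) (t : ℝ) :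
    Tendsto (fun h : ℝ => ((∫ s in (0:ℝ)..(t+h), f s) - ∫ s in (0:ℝ)..t, f s) / h)
      (𝓝[>] (0:ℝ)) (𝓝 (f t)) := by
  have hF : HasDerivAt (fun x => ∫ s in (0:ℝ)..x, f s) (f t) t :=
    intervalIntegral.integral_hasDerivAt_right (hf.intervalIntegrable 0 t)
      (hf.stronglyMeasurableAtFilter _ _) hf.continuousAt
  rw [hasDerivAt_iff_tendsto_slope] at hF
  have hmap : Tendsto (fun h : ℝ => t + h) (𝓝[>] (0:ℝ)) (𝓝[≠] t) := by
    apply tendsto_nhdsWithin_of_tendsto_nhds_of_eventually_within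
    · simpa using (tendsto_const_nhds.add (tendsto_nhdsWithin_of_tendsto_nhds tendsto_id) :
        Tendsto (fun h : ℝ => t + h) (𝓝[>] (0:ℝ)) (𝓝 (t + 0)))
    · filter_upwards [self_mem_nhdsWithin] with h (hh : 0 < h)
      simp [hh.ne']
  have := hF.comp hmap
  convert this using 2 with h
  simp [slope, Function.comp, div_eq_inv_mul]

/-- for a continuous positive path `r`, `Q(t) = σ² ∫₀^t r(s)^(2β) ds`,
and points `t₁, …, t_m ≥ 0` with `Σᵢ |log r(tᵢ)| > 0`, the estimator
`β̂₁(h) = (Σᵢ |log((Q(tᵢ+h) - Q(tᵢ))/(σ² h))|) / (2 Σᵢ |log r(tᵢ)|)` converges to `β`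
as `h → 0⁺`. -/
theorem ckls_beta_hat_one_consistent (σ β : ℝ) (hσ : 0 < σ)
    (hβ : β ∈ Set.Ioo (1/2 : ℝ) 1)
    (r : ℝ → ℝ) (hr : Continuous r) (hrpos : ∀ s, 0 < r s)
    (Q : ℝ → ℝ) (hQ : ∀ t, Q t = σ^2 * ∫ s in (0:ℝ)..t, r s ^ (2*β))
    (m : ℕ) (t : Fin m → ℝ) (ht : ∀ i, 0 ≤ t i)
    (hsum : 0 < ∑ i, |Real.log (r (t i))|) :
    Tendsto
      (fun h : ℝ =>
        (∑ i, |Real.log ((Q (t i + h) - Q (t i)) / (σ^2 * h))|) /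
          (2 * ∑ i, |Real.log (r (t i))|))
      (𝓝[>] (0:ℝ)) (𝓝 β) := by
  set f : ℝ → ℝ := fun s => r s ^ (2*β) with hf
  have hfc : Continuous f := hr.rpow_const (fun s => Or.inl (hrpos s).ne')
  have hσ2 : (σ:ℝ)^2 ≠ 0 := by positivity
  have hβpos : 0 < 2 * β := by nlinarith [hβ.1]
  -- each term tends to 2β |log r(tᵢ)|
  have hterm : ∀ i : Fin m,
      Tendsto (fun h : ℝ => |Real.log ((Q (t i + h) - Q (t i)) / (σ^2 * h))|)
        (𝓝[>] (0:ℝ)) (𝓝 (2 * β * |Real.log (r (t i))|)) := by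
    intro i
    have h1 : Tendsto (fun h : ℝ => (Q (t i + h) - Q (t i)) / (σ^2 * h))
        (𝓝[>] (0:ℝ)) (𝓝 (f (t i))) := by
      have := aux_avg_tendsto f hfc (t i)
      refine this.congr (fun h => ?_)
      rw [hQ, hQ, ← mul_sub, mul_div_mul_left _ _ hσ2]
    have hfpos : 0 < f (t i) := Real.rpow_pos_of_pos (hrpos _) _
    have h2 : Tendsto (fun h : ℝ => |Real.log ((Q (t i + h) - Q (t i)) / (σ^2 * h))|)
        (𝓝[>] (0:ℝ)) (𝓝 |Real.log (f (t i))|) :=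
      (continuous_abs.continuousAt.comp (Real.continuousAt_log hfpos.ne')).tendsto.comp h1
    have : |Real.log (f (t i))| = 2 * β * |Real.log (r (t i))| := by
      rw [hf]
      simp only
      rw [Real.log_rpow (hrpos _), abs_mul, abs_of_pos hβpos]
    rwa [this] at h2
  have hsumT : Tendsto (fun h : ℝ => ∑ i, |Real.log ((Q (t i + h) - Q (t i)) / (σ^2 * h))|)
      (𝓝[>] (0:ℝ)) (𝓝 (∑ i, 2 * β * |Real.log (r (t i))|)) :=
    tendsto_finset_sum _ (fun i _ => hterm i)
  have hden : (2 * ∑ i, |Real.log (r (t i))|) ≠ 0 := by positivity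
  have := hsumT.div_const (2 * ∑ i, |Real.log (r (t i))|)
  have heq : (∑ i, 2 * β * |Real.log (r (t i))|) / (2 * ∑ i, |Real.log (r (t i))|) = β := by
    rw [← Finset.mul_sum]
    field_simp
  rwa [heq] at this
end

section
/- Let σ > 0, β ∈ (1/2, 1), and let r : [0, ∞) → ℝ be continuous with r(u) > 0 for all u; define Q(t) = σ²·∫₀^t r(u)^{2β} du. Let s₁, …, s_m ≥ 0 and t₁, …, t_m ≥ 0 be points such that Σ_{i=1}^m |log(r(t_i)/r(s_i))| > 0. Then the estimator β̂₂(h) = (Σ_{i=1}^m |log((Q(t_i+h) − Q(t_i))/(Q(s_i+h) − Q(s_i)))|) / (2·Σ_{i=1}^m |log(r(t_i)/r(s_i))|) converges to β as h → 0⁺. -/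
open MeasureTheory Set Filter Topology

/-- for a continuous positive path `r`, `Q(t) = σ² ∫₀^t r(u)^(2β) du`,
and points `s₁, …, s_m ≥ 0`, `t₁, …, t_m ≥ 0` with `Σᵢ |log(r(tᵢ)/r(sᵢ))| > 0`,
the estimator
`β̂₂(h) = (Σᵢ |log((Q(tᵢ+h) - Q(tᵢ))/(Q(sᵢ+h) - Q(sᵢ)))|) / (2 Σᵢ |log(r(tᵢ)/r(sᵢ))|)`
converges to `β` as `h → 0⁺`. -/
theorem ckls_beta_hat_two_consistent (σ β : ℝ) (hσ : 0 < σ)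
    (hβ : β ∈ Set.Ioo (1/2 : ℝ) 1)
    (r : ℝ → ℝ) (hr : Continuous r) (hrpos : ∀ u, 0 < r u)
    (Q : ℝ → ℝ) (hQ : ∀ t, Q t = σ^2 * ∫ u in (0:ℝ)..t, r u ^ (2*β))
    (m : ℕ) (s t : Fin m → ℝ) (hs : ∀ i, 0 ≤ s i) (ht : ∀ i, 0 ≤ t i)
    (hsum : 0 < ∑ i, |Real.log (r (t i) / r (s i))|) :
    Tendsto
      (fun h : ℝ =>
        (∑ i, |Real.log ((Q (t i + h) - Q (t i)) / (Q (s i + h) - Q (s i)))|) /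
          (2 * ∑ i, |Real.log (r (t i) / r (s i))|))
      (𝓝[>] (0:ℝ)) (𝓝 β) := by
  have hQ' : Q = fun x => σ^2 * ∫ u in (0:ℝ)..x, r u ^ (2*β) := funext hQ
  subst hQ'
  set Q : ℝ → ℝ := fun x => σ^2 * ∫ u in (0:ℝ)..x, r u ^ (2*β) with hQdef
  have hf : Continuous fun u => r u ^ (2*β) :=
    hr.rpow_const (fun u => Or.inl (hrpos u).ne')
  have hfpos : ∀ a, (0:ℝ) < r a ^ (2*β) := fun a => Real.rpow_pos_of_pos (hrpos a) _
  -- difference quotient of Q tends to σ² r(a)^{2β}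
  have hderiv : ∀ a : ℝ, Tendsto (fun h => (Q (a+h) - Q a)/h) (𝓝[>] (0:ℝ))
      (𝓝 (σ^2 * r a ^ (2*β))) := by
    intro a
    have hQd : HasDerivAt Q (σ^2 * r a ^ (2*β)) a := by
      have h1 : HasDerivAt (fun x => ∫ u in (0:ℝ)..x, r u ^ (2*β)) (r a ^ (2*β)) a := by
        exact (hf.integral_hasStrictDerivAt 0 a).hasDerivAt
      simpa using h1.const_mul (σ^2)
    have hslope := hasDerivAt_iff_tendsto_slope.1 hQd
    have hmap : Tendsto (fun h : ℝ => a + h) (𝓝[>] (0:ℝ)) (𝓝[≠] a) := by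
      rw [tendsto_nhdsWithin_iff]
      constructor
      · have : Tendsto (fun h : ℝ => a + h) (𝓝 (0:ℝ)) (𝓝 a) := by
          simpa using ((continuous_add_left a).tendsto (0:ℝ))
        exact this.mono_left nhdsWithin_le_nhds
      · filter_upwards [self_mem_nhdsWithin] with h (hh : 0 < h)
        simp [hh.ne']
    have := hslope.comp hmap
    refine this.congr fun h => ?_
    simp [slope, Function.comp, div_eq_inv_mul]
  have h2β : (0:ℝ) < 2*β := by linarith [hβ.1]
  -- limit of each term of the numerator
  have hterm : ∀ i : Fin m,
      Tendsto (fun h : ℝ => |Real.log ((Q (t i + h) - Q (t i)) / (Q (s i + h) - Q (s i)))|)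
        (𝓝[>] (0:ℝ)) (𝓝 (2*β * |Real.log (r (t i) / r (s i))|)) := by
    intro i
    have hLpos : (0:ℝ) < (σ^2 * r (t i) ^ (2*β)) / (σ^2 * r (s i) ^ (2*β)) :=
      div_pos (mul_pos (pow_pos hσ 2) (hfpos _)) (mul_pos (pow_pos hσ 2) (hfpos _))
    have hratio : Tendsto (fun h : ℝ => (Q (t i + h) - Q (t i)) / (Q (s i + h) - Q (s i)))
        (𝓝[>] (0:ℝ)) (𝓝 ((σ^2 * r (t i) ^ (2*β)) / (σ^2 * r (s i) ^ (2*β)))) := by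
      have hd := (hderiv (t i)).div (hderiv (s i))
        (ne_of_gt (mul_pos (pow_pos hσ 2) (hfpos _)))
      refine hd.congr' ?_
      filter_upwards [self_mem_nhdsWithin] with h (hh : 0 < h)
      simp only [Pi.div_apply]
      rw [div_div_div_cancel_right₀ hh.ne']
    have hcont : ContinuousAt (fun x : ℝ => |Real.log x|)
        ((σ^2 * r (t i) ^ (2*β)) / (σ^2 * r (s i) ^ (2*β))) :=
      continuous_abs.continuousAt.comp (Real.continuousAt_log hLpos.ne')
    have := hcont.tendsto.comp hratio
    have hval : |Real.log ((σ^2 * r (t i) ^ (2*β)) / (σ^2 * r (s i) ^ (2*β)))|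
        = 2*β * |Real.log (r (t i) / r (s i))| := by
      rw [mul_div_mul_left _ _ (ne_of_gt (pow_pos hσ 2)),
        ← Real.div_rpow (hrpos (t i)).le (hrpos (s i)).le,
        Real.log_rpow (div_pos (hrpos (t i)) (hrpos (s i))), abs_mul,
        abs_of_pos h2β]
    rw [hval] at this
    exact this
  have hnum : Tendsto (fun h : ℝ =>
      ∑ i, |Real.log ((Q (t i + h) - Q (t i)) / (Q (s i + h) - Q (s i)))|)
      (𝓝[>] (0:ℝ)) (𝓝 (∑ i, 2*β * |Real.log (r (t i) / r (s i))|)) :=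
    tendsto_finset_sum _ (fun i _ => hterm i)
  have hfinal := hnum.div_const (2 * ∑ i, |Real.log (r (t i) / r (s i))|)
  have heq : (∑ i, 2*β * |Real.log (r (t i) / r (s i))|) /
      (2 * ∑ i, |Real.log (r (t i) / r (s i))|) = β := by
    rw [← Finset.mul_sum]
    field_simp
  rwa [heq] at hfinal
end
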